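/- arXiv:1303.0369 — 6 statements merged into one kernel-verified Lean document; each statement's English description precedes it below -/
import Mathlib

section
/- Let G be a finite connected simple graph such that vertices i and j are distinct and not adjacent in G, and let G+ij be the graph obtained from G by adding a new edge ij. Then C(G+ij) − C(G) = 1/Ω_G(i,j) + Σ_{pq ∈ E(G)} [Ω_G(p,i)+Ω_G(q,j)−Ω_G(p,j)−Ω_G(q,i)]² / ( 4Ω_G(p,q)²(1+Ω_G(i,j)) − Ω_G(p,q)·[Ω_G(p,i)+Ω_G(q,j)−Ω_G(p,j)−Ω_G(q,i)]² ). -/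
open Matrix Finset

/-- The Moore–Penrose pseudoinverse of a real square matrix, specified (when it exists)
by the four Penrose conditions. -/
noncomputable def pinv {n : Type*} [Fintype n] [DecidableEq n] (A : Matrix n n ℝ) :
    Matrix n n ℝ :=
  open scoped Classical in
  if h : ∃ B, A * B * A = A ∧ B * A * B = B ∧ (A * B)ᵀ = A * B ∧ (B * A)ᵀ = B * A
  then h.choose else 0

/-- The resistance distance between two vertices of a graph:
`Ω_G(i,j) = (e_i − e_j)ᵀ L⁺ (e_i − e_j)` where `L⁺` is the Moore–Penrose pseudoinverse
of the Laplacian matrix of `G`. -/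
noncomputable def resDist {V : Type*} [Fintype V] [DecidableEq V] (G : SimpleGraph V)
    (i j : V) : ℝ :=
  letI : DecidableRel G.Adj := Classical.decRel _
  (Pi.single i 1 - Pi.single j 1) ⬝ᵥ
    (pinv (G.lapMatrix ℝ)) *ᵥ (Pi.single i 1 - Pi.single j 1)

lemma resDist_comm {V : Type*} [Fintype V] [DecidableEq V] (G : SimpleGraph V) (i j : V) :
    resDist G i j = resDist G j i := by
  unfold resDist
  rw [show (Pi.single j 1 - Pi.single i 1 : V → ℝ)
        = -(Pi.single i 1 - Pi.single j 1) by rw [neg_sub]]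
  rw [Matrix.mulVec_neg, dotProduct_neg, neg_dotProduct, neg_neg]

/-- The global cyclicity index `C(G) = Σ_{ij ∈ E(G)} (1/Ω_G(i,j) − 1)`,
the sum over all edges of `G`. -/
noncomputable def cyclicity {V : Type*} [Fintype V] [DecidableEq V] (G : SimpleGraph V) : ℝ :=
  letI : DecidableRel G.Adj := Classical.decRel _
  ∑ e ∈ G.edgeFinset,
    Sym2.lift ⟨fun i j => 1 / resDist G i j - 1,
      fun i j => by simp only []; rw [resDist_comm G i j]⟩ e

/-
For connected `G` the matrix `K = L + J/n` (`J` the all-ones matrix) is positive definite and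
`L⁺ = K⁻¹ - J/n`, so `Ω_G(p,q) = (e_p - e_q)ᵀ K⁻¹ (e_p - e_q)`. Adding the edge `ij` adds the
rank-one term `u uᵀ`, `u = e_i - e_j`, to `K`, and the Sherman–Morrison formula gives
`Ω_{G+ij}(p,q) = Ω_G(p,q) - β_pq² / (4 (1 + Ω_G(i,j)))`, where by polarization
`β_pq = Ω_G(p,i) + Ω_G(q,j) - Ω_G(p,j) - Ω_G(q,i) = -2 (e_p - e_q)ᵀ K⁻¹ u`.
The new edge gets resistance `Ω_G(i,j) / (1 + Ω_G(i,j))`, i.e. conductance defect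
`1 / Ω_G(i,j)`, and on each old edge the change of conductance is the summand.
-/

namespace Matrix

variable {n : Type*} [Fintype n] [DecidableEq n]

omit [DecidableEq n] in
theorem eq_of_penrose {A B C : Matrix n n ℝ}
    (hB₁ : A * B * A = A) (hB₂ : B * A * B = B) (hB₃ : (A * B)ᵀ = A * B) (hB₄ : (B * A)ᵀ = B * A)
    (hC₁ : A * C * A = A) (hC₂ : C * A * C = C) (hC₃ : (A * C)ᵀ = A * C)
    (hC₄ : (C * A)ᵀ = C * A) : B = C := by
  have hAB : A * B = A * C := calc
    A * B = (A * C * A * B)ᵀ := by rw [hC₁, hB₃]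
    _ = (A * B)ᵀ * (A * C)ᵀ := by rw [← transpose_mul]; noncomm_ring
    _ = A * B * A * C := by rw [hB₃, hC₃]; noncomm_ring
    _ = A * C := by rw [hB₁]
  have hBA : B * A = C * A := calc
    B * A = (B * (A * C * A))ᵀ := by rw [hC₁, hB₄]
    _ = (C * A)ᵀ * (B * A)ᵀ := by rw [← transpose_mul]; noncomm_ring
    _ = C * (A * B * A) := by rw [hC₄, hB₄]; noncomm_ring
    _ = C * A := by rw [hB₁]
  calc B = B * A * B := hB₂.symm
    _ = C * A * C := by rw [hBA, Matrix.mul_assoc, hAB, ← Matrix.mul_assoc]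
    _ = C := hC₂

theorem pinv_eq_of_penrose {A B : Matrix n n ℝ}
    (h₁ : A * B * A = A) (h₂ : B * A * B = B) (h₃ : (A * B)ᵀ = A * B) (h₄ : (B * A)ᵀ = B * A) :
    pinv A = B := by
  have hex : ∃ C, A * C * A = A ∧ C * A * C = C ∧ (A * C)ᵀ = A * C ∧ (C * A)ᵀ = C * A :=
    ⟨B, h₁, h₂, h₃, h₄⟩
  obtain ⟨c₁, c₂, c₃, c₄⟩ := hex.choose_spec
  rw [pinv, dif_pos hex]
  exact eq_of_penrose c₁ c₂ c₃ c₄ h₁ h₂ h₃ h₄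

theorem pinv_eq_inv_add_sub {A P : Matrix n n ℝ} (hP : P * P = P) (hPt : Pᵀ = P)
    (hAP : A * P = 0) (hPA : P * A = 0) (hK : IsUnit (A + P).det) :
    pinv A = (A + P)⁻¹ - P := by
  set M := (A + P)⁻¹
  have hMP : M * P = P := calc
    M * P = M * ((A + P) * P) := by rw [add_mul, hAP, hP, zero_add]
    _ = P := by rw [← Matrix.mul_assoc, nonsing_inv_mul _ hK, Matrix.one_mul]
  have hPM : P * M = P := calc
    P * M = P * (A + P) * M := by rw [mul_add, hPA, hP, zero_add]
    _ = P := by rw [Matrix.mul_assoc, mul_nonsing_inv _ hK, Matrix.mul_one]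
  have hAB : A * (M - P) = 1 - P := by
    rw [mul_sub, hAP, sub_zero, eq_sub_iff_add_eq, ← hPM, ← add_mul, mul_nonsing_inv _ hK]
  have hBA : (M - P) * A = 1 - P := by
    rw [sub_mul, hPA, sub_zero, eq_sub_iff_add_eq, ← hMP, ← mul_add, nonsing_inv_mul _ hK]
  apply pinv_eq_of_penrose
  · rw [hAB, sub_mul, Matrix.one_mul, hPA, sub_zero]
  · rw [hBA, sub_mul, Matrix.one_mul, mul_sub, hPM, hP, sub_self, sub_zero]
  · rw [hAB, transpose_sub, transpose_one, hPt]
  · rw [hBA, transpose_sub, transpose_one, hPt]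

theorem inv_add_vecMulVec {K : Type*} [Field K] {A : Matrix n n K} (hA : IsUnit A.det)
    (u v : n → K)
    (h : 1 + v ⬝ᵥ (A⁻¹ *ᵥ u) ≠ 0) :
    (A + vecMulVec u v)⁻¹ =
      A⁻¹ - (1 + v ⬝ᵥ (A⁻¹ *ᵥ u))⁻¹ • vecMulVec (A⁻¹ *ᵥ u) (v ᵥ* A⁻¹) := by
  apply inv_eq_right_inv
  rw [add_mul, mul_sub, mul_sub, Matrix.mul_smul, Matrix.mul_smul, mul_vecMulVec, mul_vecMulVec,
    vecMulVec_mul, mulVec_mulVec, mul_nonsing_inv _ hA, one_mulVec, vecMulVec_mulVec,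
    op_smul_eq_smul, smul_vecMulVec]
  linear_combination (norm := module) -(inv_mul_cancel₀ h) • vecMulVec u (v ᵥ* A⁻¹)

omit [DecidableEq n] in
theorem IsSymm.dotProduct_mulVec_sub_polarization {R : Type*} [CommRing R] {M : Matrix n n R}
    (hM : M.IsSymm) (x y z w : n → R) :
    (x - z) ⬝ᵥ M *ᵥ (x - z) + (y - w) ⬝ᵥ M *ᵥ (y - w) - (x - w) ⬝ᵥ M *ᵥ (x - w)
      - (y - z) ⬝ᵥ M *ᵥ (y - z) = -2 * ((x - y) ⬝ᵥ M *ᵥ (z - w)) := by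
  have hswap (a b : n → R) : b ⬝ᵥ M *ᵥ a = a ⬝ᵥ M *ᵥ b := by
    rw [dotProduct_mulVec, ← mulVec_transpose, hM.eq, dotProduct_comm]
  simp only [mulVec_sub, dotProduct_sub, sub_dotProduct]
  linear_combination hswap x w + hswap y z - hswap x z - hswap y w

end Matrix

/-- `J / n`: the orthogonal projection onto the constant vectors. -/
noncomputable def constProj (V : Type*) [Fintype V] : Matrix V V ℝ :=
  Matrix.of fun _ _ => (Fintype.card V : ℝ)⁻¹

section constProj

variable {V : Type*} [Fintype V]

theorem transpose_constProj : (constProj V)ᵀ = constProj V := rfl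

theorem constProj_mulVec (x : V → ℝ) :
    constProj V *ᵥ x = fun _ => (Fintype.card V : ℝ)⁻¹ * ∑ v, x v := by
  ext; simp [constProj, mulVec, dotProduct, Finset.mul_sum]

theorem constProj_mul_self [Nonempty V] : constProj V * constProj V = constProj V := by
  ext a b
  simp [constProj, Matrix.mul_apply, Finset.card_univ]

variable [DecidableEq V] (G : SimpleGraph V) [DecidableRel G.Adj]

theorem SimpleGraph.lapMatrix_mul_constProj : G.lapMatrix ℝ * constProj V = 0 := by
  ext a b
  have h := congrFun (G.lapMatrix_mulVec_const_eq_zero (R := ℝ)) a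
  simp only [mulVec, dotProduct, mul_one, Pi.zero_apply] at h
  simp [constProj, Matrix.mul_apply, ← Finset.sum_mul, h]

theorem SimpleGraph.constProj_mul_lapMatrix : constProj V * G.lapMatrix ℝ = 0 := by
  rw [← transpose_constProj, ← (G.isSymm_lapMatrix ℝ).eq, ← transpose_mul,
    lapMatrix_mul_constProj, transpose_zero]

end constProj

namespace SimpleGraph

variable {V : Type*} [Fintype V] [DecidableEq V] {R : Type*} [Ring R]

theorem lapMatrix_eq_diagonal_adjMatrix_mulVec_sub (G : SimpleGraph V) [DecidableRel G.Adj] :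
    G.lapMatrix R = diagonal (G.adjMatrix R *ᵥ 1) - G.adjMatrix R := by
  rw [lapMatrix, degMatrix]
  congr
  ext v
  simp

omit [Fintype V] [DecidableEq V] in
theorem adjMatrix_sup_of_disjoint {G H : SimpleGraph V} [DecidableRel G.Adj] [DecidableRel H.Adj]
    [DecidableRel (G ⊔ H).Adj] (h : Disjoint G H) :
    (G ⊔ H).adjMatrix R = G.adjMatrix R + H.adjMatrix R := by
  ext a b
  have hnot : ¬ (G.Adj a b ∧ H.Adj a b) := fun hab => h.le_bot hab
  by_cases hG : G.Adj a b <;> by_cases hH : H.Adj a b <;> simp_all [adjMatrix_apply]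

theorem lapMatrix_sup_of_disjoint {G H : SimpleGraph V} [DecidableRel G.Adj] [DecidableRel H.Adj]
    [DecidableRel (G ⊔ H).Adj] (h : Disjoint G H) :
    (G ⊔ H).lapMatrix R = G.lapMatrix R + H.lapMatrix R := by
  rw [lapMatrix_eq_diagonal_adjMatrix_mulVec_sub, lapMatrix_eq_diagonal_adjMatrix_mulVec_sub,
    lapMatrix_eq_diagonal_adjMatrix_mulVec_sub, adjMatrix_sup_of_disjoint h, add_mulVec,
    sub_add_sub_comm, diagonal_add]
  rfl

theorem lapMatrix_edge {i j : V} (hij : i ≠ j) :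
    (edge i j).lapMatrix R =
      vecMulVec (Pi.single i 1 - Pi.single j 1) (Pi.single i 1 - Pi.single j 1) := by
  ext a b
  rw [lapMatrix_eq_diagonal_adjMatrix_mulVec_sub]
  by_cases hai : a = i <;> by_cases haj : a = j <;> by_cases hbi : b = i <;>
    by_cases hbj : b = j <;>
    simp_all [diagonal_apply, mulVec, dotProduct, adjMatrix_apply, edge_adj, vecMulVec_apply,
      Finset.filter_and, Finset.filter_eq'] <;> grind

variable {G : SimpleGraph V} [DecidableRel G.Adj]

theorem lapMatrix_sup_edge {i j : V} (hij : i ≠ j) (hadj : ¬ G.Adj i j) :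
    (G ⊔ edge i j).lapMatrix R = G.lapMatrix R +
      vecMulVec (Pi.single i 1 - Pi.single j 1) (Pi.single i 1 - Pi.single j 1) := by
  rw [lapMatrix_sup_of_disjoint (G.disjoint_edge.mpr hadj), lapMatrix_edge hij]

theorem Connected.posDef_lapMatrix_add_constProj (hG : G.Connected) :
    (G.lapMatrix ℝ + constProj V).PosDef := by
  have : Nonempty V := hG.nonempty
  refine .of_dotProduct_mulVec_pos ?_ fun x hx => ?_
  · rw [IsHermitian, conjTranspose_eq_transpose_of_trivial, transpose_add, transpose_constProj,
      (G.isSymm_lapMatrix ℝ).eq]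
  have hn : (0 : ℝ) < Fintype.card V := by exact_mod_cast Fintype.card_pos
  have hL : 0 ≤ x ⬝ᵥ G.lapMatrix ℝ *ᵥ x := by
    simpa using (posSemidef_lapMatrix ℝ G).dotProduct_mulVec_nonneg x
  have hP : x ⬝ᵥ constProj V *ᵥ x = (Fintype.card V : ℝ)⁻¹ * (∑ v, x v) ^ 2 := by
    simp only [constProj_mulVec, dotProduct, ← Finset.sum_mul]
    ring
  have hP₀ : 0 ≤ (Fintype.card V : ℝ)⁻¹ * (∑ v, x v) ^ 2 := by positivity
  rw [star_trivial, add_mulVec, dotProduct_add, hP]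
  by_contra! hle
  have hL₀ : x ⬝ᵥ G.lapMatrix ℝ *ᵥ x = 0 := by linarith
  have hsum : ∑ v, x v = 0 := by
    have : (Fintype.card V : ℝ)⁻¹ * (∑ v, x v) ^ 2 = 0 := by linarith
    simpa [hn.ne'] using this
  have hconst : ∀ a b, x a = x b := fun a b =>
    (G.lapMatrix_toLinearMap₂'_apply'_eq_zero_iff_forall_reachable x).mp
      (by rwa [toLinearMap₂'_apply']) a b (hG.preconnected a b)
  apply hx
  ext a
  have : (Fintype.card V : ℝ) * x a = 0 := by
    rw [← hsum, Finset.sum_congr rfl fun b _ => hconst b a]; simp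
  simpa [hn.ne'] using this

end SimpleGraph

section resDist

open SimpleGraph

variable {V : Type*} [Fintype V] [DecidableEq V] {G : SimpleGraph V} [DecidableRel G.Adj]

theorem SimpleGraph.Connected.pinv_lapMatrix (hG : G.Connected) :
    pinv (G.lapMatrix ℝ) = (G.lapMatrix ℝ + constProj V)⁻¹ - constProj V :=
  have : Nonempty V := hG.nonempty
  pinv_eq_inv_add_sub constProj_mul_self transpose_constProj G.lapMatrix_mul_constProj
    G.constProj_mul_lapMatrix
    ((isUnit_iff_isUnit_det _).mp hG.posDef_lapMatrix_add_constProj.isUnit)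

theorem resDist_eq_dotProduct_inv_mulVec (hG : G.Connected) (p q : V) :
    resDist G p q = (Pi.single p 1 - Pi.single q 1) ⬝ᵥ
      (G.lapMatrix ℝ + constProj V)⁻¹ *ᵥ (Pi.single p 1 - Pi.single q 1) := by
  have hw : constProj V *ᵥ (Pi.single p 1 - Pi.single q 1 : V → ℝ) = 0 := by
    ext; simp [constProj_mulVec, Finset.sum_sub_distrib]
  rw [resDist, Subsingleton.elim (Classical.decRel _) ‹DecidableRel G.Adj›, hG.pinv_lapMatrix,
    sub_mulVec, hw, sub_zero]

omit [DecidableRel G.Adj] in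
theorem resDist_pos (hG : G.Connected) {p q : V} (hpq : p ≠ q) : 0 < resDist G p q := by
  classical
  have hw : (Pi.single p 1 - Pi.single q 1 : V → ℝ) ≠ 0 := fun h => by
    simpa [hpq] using congrFun h p
  simpa [resDist_eq_dotProduct_inv_mulVec hG] using
    hG.posDef_lapMatrix_add_constProj.inv.dotProduct_mulVec_pos hw

omit [DecidableRel G.Adj] in
theorem resDist_self (p : V) : resDist G p p = 0 := by
  simp [resDist]

omit [DecidableRel G.Adj] in
theorem resDist_sup_edge (hG : G.Connected) {i j : V} (hij : i ≠ j) (hadj : ¬ G.Adj i j)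
    (p q : V) :
    resDist (G ⊔ edge i j) p q = resDist G p q -
      (resDist G p i + resDist G q j - resDist G p j - resDist G q i) ^ 2 /
        (4 * (1 + resDist G i j)) := by
  classical
  set K := G.lapMatrix ℝ + constProj V
  set u : V → ℝ := Pi.single i 1 - Pi.single j 1
  set w : V → ℝ := Pi.single p 1 - Pi.single q 1
  have hK : IsUnit K.det := (isUnit_iff_isUnit_det _).mp hG.posDef_lapMatrix_add_constProj.isUnit
  have hM : K⁻¹.IsSymm := by
    rw [IsSymm, transpose_nonsing_inv, transpose_add, transpose_constProj,
      (G.isSymm_lapMatrix ℝ).eq]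
  have hc : resDist G i j = u ⬝ᵥ K⁻¹ *ᵥ u := resDist_eq_dotProduct_inv_mulVec hG i j
  have hΩ : resDist G p q = w ⬝ᵥ K⁻¹ *ᵥ w := resDist_eq_dotProduct_inv_mulVec hG p q
  have hc₁ : 1 + u ⬝ᵥ K⁻¹ *ᵥ u ≠ 0 := by rw [← hc]; linarith [resDist_pos hG hij]
  have hK' : (G ⊔ edge i j).lapMatrix ℝ + constProj V = K + vecMulVec u u := by
    rw [lapMatrix_sup_edge hij hadj, add_right_comm]
  have hbracket : resDist G p i + resDist G q j - resDist G p j - resDist G q i =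
      -2 * (w ⬝ᵥ K⁻¹ *ᵥ u) := by
    simp only [resDist_eq_dotProduct_inv_mulVec hG]
    exact hM.dotProduct_mulVec_sub_polarization _ _ _ _
  have hswap : u ᵥ* K⁻¹ ⬝ᵥ w = w ⬝ᵥ K⁻¹ *ᵥ u := by
    rw [← mulVec_transpose, hM.eq, dotProduct_comm]
  have hΩ' : resDist (G ⊔ edge i j) p q =
      w ⬝ᵥ ((G ⊔ edge i j).lapMatrix ℝ + constProj V)⁻¹ *ᵥ w :=
    resDist_eq_dotProduct_inv_mulVec (hG.mono le_sup_left) p q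
  rw [hΩ', hK', inv_add_vecMulVec hK u u hc₁, hbracket, hc, hΩ, sub_mulVec, dotProduct_sub,
    smul_mulVec, vecMulVec_mulVec, op_smul_eq_smul, dotProduct_smul, dotProduct_smul, hswap,
    smul_eq_mul, smul_eq_mul]
  field_simp
  ring

theorem cyclicity_eq_sum (H : SimpleGraph V) [Fintype H.edgeSet] :
    cyclicity H = ∑ e ∈ H.edgeFinset,
      Sym2.lift ⟨fun a b => 1 / resDist H a b - 1,
        fun a b => congrArg (fun r => 1 / r - 1) (resDist_comm H a b)⟩ e := by
  rw [cyclicity]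
  congr!

end resDist

theorem one_div_sub_sq_div_sub_one_div {Ω β c : ℝ} (hΩ : Ω ≠ 0) (hc : 1 + c ≠ 0)
    (h : Ω - β ^ 2 / (4 * (1 + c)) ≠ 0) :
    1 / (Ω - β ^ 2 / (4 * (1 + c))) - 1 / Ω = β ^ 2 / (4 * Ω ^ 2 * (1 + c) - Ω * β ^ 2) := by
  have hden : 4 * Ω ^ 2 * (1 + c) - Ω * β ^ 2 =
      4 * Ω * (1 + c) * (Ω - β ^ 2 / (4 * (1 + c))) := by
    field_simp
  rw [hden, div_sub_div _ _ h hΩ, div_eq_div_iff (mul_ne_zero h hΩ) (by positivity)]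
  field_simp
  ring

open SimpleGraph in
theorem stmt1 {V : Type*} [Fintype V] [DecidableEq V] (G : SimpleGraph V) [DecidableRel G.Adj]
    (hG : G.Connected) (i j : V) (hij : i ≠ j) (hadj : ¬ G.Adj i j)
    (G' : SimpleGraph V) (hG' : G' = G ⊔ SimpleGraph.fromEdgeSet {s(i, j)}) :
    cyclicity G' - cyclicity G = 1 / resDist G i j +
      ∑ e ∈ G.edgeFinset, Sym2.lift ⟨fun p q =>
        (resDist G p i + resDist G q j - resDist G p j - resDist G q i) ^ 2 /
          (4 * (resDist G p q) ^ 2 * (1 + resDist G i j) - resDist G p q *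
            (resDist G p i + resDist G q j - resDist G p j - resDist G q i) ^ 2),
        fun p q => by simp only []; rw [resDist_comm G q p]; ring⟩ e := by
  subst hG'
  have hΩ := resDist_pos hG hij
  rw [show fromEdgeSet {s(i, j)} = edge i j from rfl, cyclicity_eq_sum, cyclicity_eq_sum,
    G.edgeFinset_sup_edge hadj hij, sum_cons, Sym2.lift_mk, add_sub_assoc, ← sum_sub_distrib]
  congr 1
  · have hΩ' : resDist (G ⊔ edge i j) i j = resDist G i j / (1 + resDist G i j) := by
      rw [resDist_sup_edge hG hij hadj, resDist_self, resDist_self, resDist_comm G j i]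
      field_simp
      ring
    dsimp only
    rw [hΩ']
    field_simp
    ring
  · refine sum_congr rfl fun e he => ?_
    induction e using Sym2.ind with
    | _ p q =>
      have hpq := (mem_edgeFinset.mp he).ne
      have hΩ' := (resDist_pos (hG.mono (le_sup_left : G ≤ G ⊔ edge i j)) hpq).ne'
      rw [resDist_sup_edge hG hij hadj] at hΩ'
      simp only [Sym2.lift_mk, sub_sub_sub_cancel_right, resDist_sup_edge hG hij hadj]
      exact one_div_sub_sq_div_sub_one_div (resDist_pos hG hpq).ne' (by positivity) hΩ'
end

section
/- For the complete bipartite graph K_{n₁,n₂} with parts of sizes n₁ ≥ 1 and n₂ ≥ 1, the global cyclicity index equals C(K_{n₁,n₂}) = n₁n₂(n₁n₂ − n₁ − n₂ + 1)/(n₁ + n₂ − 1). -/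
open Matrix Finset

/-!
For a symmetric matrix `L`, any generalized inverse (`L * L⁺ * L = L`) gives
`bᵀ L⁺ b = bᵀ x` whenever `L x = b`; the Moore–Penrose inverse of `L` exists by the spectral
theorem. Hence `Ω(i,j) = x i - x j` for any potential `x` with `L x = e_i - e_j`. On `K_{p,q}`
the potential of a unit current from `a` to `b` is `1/q` at `a`, `0` on the rest of the first
part, `1/(pq)` on the second part and `1/(pq) - 1/p` at `b`, so every edge has
`Ω = (p + q - 1)/(pq)`, and the `pq` edges contribute `pq/(p + q - 1) - 1` each.
-/

section Pinv

variable {n : Type*} [Fintype n] [DecidableEq n]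

theorem exists_penrose_of_isHermitian {A : Matrix n n ℝ} (hA : A.IsHermitian) :
    ∃ B, A * B * A = A ∧ B * A * B = B ∧ (A * B)ᵀ = A * B ∧ (B * A)ᵀ = B * A := by
  set U : Matrix n n ℝ := (hA.eigenvectorUnitary : Matrix n n ℝ)
  set d := hA.eigenvalues
  have hUU : Uᴴ * U = 1 := Unitary.coe_star_mul_self hA.eigenvectorUnitary
  have hA' : A = U * diagonal d * Uᴴ := by
    have h := hA.spectral_theorem
    simp only [Unitary.conjStarAlgAut_apply, RCLike.ofReal_real_eq_id, Function.id_comp] at h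
    exact h
  have conj_mul : ∀ X Y : Matrix n n ℝ, U * X * Uᴴ * (U * Y * Uᴴ) = U * (X * Y) * Uᴴ := by
    intro X Y
    calc U * X * Uᴴ * (U * Y * Uᴴ) = U * X * (Uᴴ * U) * Y * Uᴴ := by noncomm_ring
      _ = U * (X * Y) * Uᴴ := by rw [hUU]; noncomm_ring
  have conj_diagonal_transpose : ∀ e : n → ℝ, (U * diagonal e * Uᴴ)ᵀ = U * diagonal e * Uᴴ := by
    intro e
    rw [← conjTranspose_eq_transpose_of_trivial]
    simp [mul_assoc]
  refine ⟨U * diagonal d⁻¹ * Uᴴ, ?_, ?_, ?_, ?_⟩ <;>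
    simp only [hA', conj_mul, diagonal_mul_diagonal]
  · simp only [Pi.inv_apply, mul_inv_mul_cancel]
  · congr 3 with i
    simpa only [Pi.inv_apply, inv_inv] using mul_inv_mul_cancel (d i)⁻¹
  · exact conj_diagonal_transpose _
  · exact conj_diagonal_transpose _

theorem mul_pinv_mul_of_isHermitian {A : Matrix n n ℝ} (hA : A.IsHermitian) :
    A * pinv A * A = A := by
  have h := exists_penrose_of_isHermitian hA
  rw [pinv, dif_pos h]
  exact h.choose_spec.1

theorem dotProduct_pinv_mulVec_of_mulVec_eq {A : Matrix n n ℝ} (hA : A.IsHermitian)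
    {x b : n → ℝ} (hx : A *ᵥ x = b) : b ⬝ᵥ pinv A *ᵥ b = b ⬝ᵥ x := by
  have hAx : A *ᵥ x = x ᵥ* A := by
    rw [← vecMul_transpose, ← conjTranspose_eq_transpose_of_trivial, hA.eq]
  subst hx
  calc A *ᵥ x ⬝ᵥ pinv A *ᵥ (A *ᵥ x) = x ⬝ᵥ A *ᵥ (pinv A *ᵥ (A *ᵥ x)) := by
        rw [dotProduct_mulVec x A, hAx]
    _ = x ⬝ᵥ (A * pinv A * A) *ᵥ x := by rw [mulVec_mulVec, mulVec_mulVec]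
    _ = A *ᵥ x ⬝ᵥ x := by rw [mul_pinv_mul_of_isHermitian hA, dotProduct_comm]

end Pinv

theorem resDist_eq_sub_of_lapMatrix_mulVec {V : Type*} [Fintype V] [DecidableEq V]
    (G : SimpleGraph V) [DecidableRel G.Adj] {i j : V} {x : V → ℝ}
    (hx : G.lapMatrix ℝ *ᵥ x = Pi.single i 1 - Pi.single j 1) :
    resDist G i j = x i - x j := by
  rw [resDist, Subsingleton.elim (Classical.decRel G.Adj) ‹_›,
    dotProduct_pinv_mulVec_of_mulVec_eq (G.isHermitian_lapMatrix ℝ) hx, sub_dotProduct,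
    single_one_dotProduct, single_one_dotProduct]

section CompleteBipartite

open Fintype SimpleGraph

variable {α β : Type*} [Fintype α] [Fintype β] [DecidableEq α] [DecidableEq β]

theorem completeBipartiteGraph_lapMatrix_mulVec_inl
    [DecidableRel (completeBipartiteGraph α β).Adj] (x : α ⊕ β → ℝ) (a : α) :
    ((completeBipartiteGraph α β).lapMatrix ℝ *ᵥ x) (.inl a) =
      card β * x (.inl a) - ∑ b, x (.inr b) := by
  have h : (completeBipartiteGraph α β).neighborFinset (.inl a) = univ.map .inr := by
    ext v; cases v <;> simp
  rw [lapMatrix_mulVec_apply, ← card_neighborFinset_eq_degree, h, card_map, card_univ, sum_map]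
  rfl

theorem completeBipartiteGraph_lapMatrix_mulVec_inr
    [DecidableRel (completeBipartiteGraph α β).Adj] (x : α ⊕ β → ℝ) (b : β) :
    ((completeBipartiteGraph α β).lapMatrix ℝ *ᵥ x) (.inr b) =
      card α * x (.inr b) - ∑ a, x (.inl a) := by
  have h : (completeBipartiteGraph α β).neighborFinset (.inr b) = univ.map .inl := by
    ext v; cases v <;> simp
  rw [lapMatrix_mulVec_apply, ← card_neighborFinset_eq_degree, h, card_map, card_univ, sum_map]
  rfl

theorem resDist_completeBipartiteGraph (a : α) (b : β) :
    resDist (completeBipartiteGraph α β) (.inl a) (.inr b) =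
      (card α + card β - 1) / (card α * card β) := by
  classical
  have hp : (card α : ℝ) ≠ 0 := Nat.cast_ne_zero.2 (card_pos_iff.2 ⟨a⟩).ne'
  have hq : (card β : ℝ) ≠ 0 := Nat.cast_ne_zero.2 (card_pos_iff.2 ⟨b⟩).ne'
  -- the potential of a unit current entering at `a` and leaving at `b`
  let x : α ⊕ β → ℝ :=
    Sum.elim (fun a' ↦ if a' = a then (card β : ℝ)⁻¹ else 0)
      (fun b' ↦ ((card α : ℝ) * card β)⁻¹ - if b' = b then (card α : ℝ)⁻¹ else 0)
  have hx : (completeBipartiteGraph α β).lapMatrix ℝ *ᵥ x =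
      Pi.single (.inl a) 1 - Pi.single (.inr b) 1 := by
    ext (a' | b')
    · rw [completeBipartiteGraph_lapMatrix_mulVec_inl]
      by_cases h : a' = a <;> simp [x, h] <;> field_simp <;> ring
    · rw [completeBipartiteGraph_lapMatrix_mulVec_inr]
      by_cases h : b' = b <;> simp [x, h] <;> field_simp <;> ring
  rw [resDist_eq_sub_of_lapMatrix_mulVec _ hx]
  simp only [x, Sum.elim_inl, Sum.elim_inr, if_pos]
  field_simp
  ring

theorem cyclicity_completeBipartiteGraph :
    cyclicity (completeBipartiteGraph α β) =
      card α * card β * ((card α : ℝ) * card β - card α - card β + 1) /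
        ((card α : ℝ) + card β - 1) := by
  classical
  have hedges : (completeBipartiteGraph α β).edgeFinset =
      univ.image fun x : α × β ↦ s(.inl x.1, .inr x.2) := by
    rw [← coe_inj, coe_edgeFinset, coe_image, coe_univ, Set.image_univ,
      edgeSet_completeBipartiteGraph]
  have hinj : Function.Injective fun x : α × β ↦ s(Sum.inl x.1, Sum.inr x.2) := by
    intro x y h
    simpa [Prod.ext_iff] using h
  have hedge (a : α) (b : β) : 1 / resDist (completeBipartiteGraph α β) (.inl a) (.inr b) - 1 =
      ((card α : ℝ) * card β - card α - card β + 1) / ((card α : ℝ) + card β - 1) := by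
    have hp : (1 : ℝ) ≤ card α := Nat.one_le_cast.2 (card_pos_iff.2 ⟨a⟩)
    have hq : (1 : ℝ) ≤ card β := Nat.one_le_cast.2 (card_pos_iff.2 ⟨b⟩)
    have hpq : (card α : ℝ) + card β - 1 ≠ 0 := by linarith
    rw [resDist_completeBipartiteGraph, one_div_div]
    field_simp
    ring
  rw [cyclicity, hedges, sum_image hinj.injOn]
  simp only [Sym2.lift_mk, hedge, sum_const, card_univ, card_prod, nsmul_eq_mul]
  push_cast
  ring

end CompleteBipartite

theorem stmt5_general (n₁ n₂ : ℕ) :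
    cyclicity (completeBipartiteGraph (Fin n₁) (Fin n₂)) =
      (n₁ : ℝ) * n₂ * ((n₁ : ℝ) * n₂ - n₁ - n₂ + 1) / ((n₁ : ℝ) + n₂ - 1) := by
  simpa using cyclicity_completeBipartiteGraph (α := Fin n₁) (β := Fin n₂)

theorem stmt5 (n₁ n₂ : ℕ) (h₁ : 1 ≤ n₁) (h₂ : 1 ≤ n₂) :
    cyclicity (completeBipartiteGraph (Fin n₁) (Fin n₂)) =
      (n₁ : ℝ) * n₂ * ((n₁ : ℝ) * n₂ - n₁ - n₂ + 1) / ((n₁ : ℝ) + n₂ - 1) :=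
  stmt5_general n₁ n₂
end

section
/- For any finite connected bipartite simple graph G whose bipartition has parts of sizes n₁ and n₂, we have 0 ≤ C(G) ≤ n₁n₂(n₁n₂ − n₁ − n₂ + 1)/(n₁ + n₂ − 1); the lower bound is attained with equality if and only if G is a tree, and the upper bound is attained with equality if and only if G is the complete bipartite graph K_{n₁,n₂}. -/
open Matrix Finset

/-!
For a connected graph with Laplacian `L`, the matrix `(L + J/n)⁻¹ - J/n` satisfies the Penrose
equations, so `L L⁺ = L⁺ L = 1 - J/n`. Hence `Ω(i,j) = x i - x j = xᵀ L x` for every potential `x`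
with `L x = e_i - e_j`, and Cauchy–Schwarz for the form `L` gives Dirichlet's principle
`(z i - z j)² ≤ Ω(i,j) · zᵀ L z`. Two consequences drive the argument. Rayleigh monotonicity: adding
edges can only lower resistances. Splitting the edge `ij` off the energy of `x`: `Ω (1 - Ω)` is the
energy of `x` on the remaining edges, so `Ω ≤ 1` on edges, with equality exactly at bridges.
Thus every summand `1/Ω - 1` of `C(G)` is nonnegative and vanishes exactly at bridges, which gives
`C(G) ≥ 0` with equality for trees; and `C` is strictly monotone on connected graphs, because an
edge added to a connected graph is never a bridge. A bipartite `G` is a spanning subgraph of the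
complete bipartite graph on its parts, where an explicit potential gives
`Ω = (n₁ + n₂ - 1) / (n₁ n₂)` on each of the `n₁ n₂` edges.
-/

section Pseudoinverse

variable {n : Type*} [Fintype n]

def IsMoorePenroseInverse (A B : Matrix n n ℝ) : Prop :=
  A * B * A = A ∧ B * A * B = B ∧ (A * B)ᵀ = A * B ∧ (B * A)ᵀ = B * A

theorem IsMoorePenroseInverse.unique {A B C : Matrix n n ℝ} (hB : IsMoorePenroseInverse A B)
    (hC : IsMoorePenroseInverse A C) : B = C := by
  obtain ⟨hB₁, hB₂, hB₃, hB₄⟩ := hB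
  obtain ⟨hC₁, hC₂, hC₃, hC₄⟩ := hC
  have hAB : A * B = A * C :=
    calc A * B = (A * C * (A * B))ᵀ := by
          rw [← Matrix.mul_assoc, hC₁, hB₃]
      _ = A * B * A * C := by
          rw [transpose_mul, hB₃, hC₃, Matrix.mul_assoc (A * B)]
      _ = A * C := by rw [hB₁]
  have hBA : B * A = C * A :=
    calc B * A = (B * A * (C * A))ᵀ := by
          rw [Matrix.mul_assoc B, ← Matrix.mul_assoc A, hC₁, hB₄]
      _ = C * (A * B * A) := by
          rw [transpose_mul, hB₄, hC₄, Matrix.mul_assoc C, Matrix.mul_assoc A]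
      _ = C * A := by rw [hB₁]
  calc B = C * A * B := by rw [← hBA, hB₂]
    _ = C := by rw [Matrix.mul_assoc, hAB, ← Matrix.mul_assoc, hC₂]

theorem pinv_eq_of_isMoorePenroseInverse [DecidableEq n] {A B : Matrix n n ℝ}
    (hB : IsMoorePenroseInverse A B) : pinv A = B := by
  unfold pinv
  split_ifs with h
  · exact IsMoorePenroseInverse.unique h.choose_spec hB
  · exact absurd ⟨B, hB⟩ h

theorem mul_pinv_and_pinv_mul_eq_one_sub [DecidableEq n] {A P : Matrix n n ℝ} (hP : Pᵀ = P)
    (hPP : P * P = P) (hAP : A * P = 0) (hPA : P * A = 0) (hdet : IsUnit (A + P).det) :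
    A * pinv A = 1 - P ∧ pinv A * A = 1 - P := by
  set M := A + P
  have hMP : M * P = P := by rw [Matrix.add_mul, hAP, hPP, zero_add]
  have hPM : P * M = P := by rw [Matrix.mul_add, hPA, hPP, zero_add]
  have hMiP : M⁻¹ * P = P := by
    rw [← hMP, ← Matrix.mul_assoc, nonsing_inv_mul _ hdet, Matrix.one_mul, hMP]
  have hPMi : P * M⁻¹ = P := by
    rw [← hPM, Matrix.mul_assoc, mul_nonsing_inv _ hdet, Matrix.mul_one, hPM]
  have hA : A = M - P := by simp [M]
  have hAB : A * (M⁻¹ - P) = 1 - P := by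
    rw [hA, Matrix.sub_mul, Matrix.mul_sub, Matrix.mul_sub, mul_nonsing_inv _ hdet, hMP, hPMi, hPP]
    abel
  have hBA : (M⁻¹ - P) * A = 1 - P := by
    rw [hA, Matrix.mul_sub, Matrix.sub_mul, Matrix.sub_mul, nonsing_inv_mul _ hdet, hPM, hMiP, hPP]
    abel
  have hsymm : (1 - P)ᵀ = 1 - P := by rw [transpose_sub, transpose_one, hP]
  have hB : IsMoorePenroseInverse A (M⁻¹ - P) := by
    refine ⟨?_, ?_, hAB ▸ hsymm, hBA ▸ hsymm⟩
    · rw [hAB, Matrix.sub_mul, hPA, Matrix.one_mul, sub_zero]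
    · rw [hBA, Matrix.sub_mul, Matrix.one_mul, Matrix.mul_sub, hPMi, hPP, sub_self, sub_zero]
  rw [pinv_eq_of_isMoorePenroseInverse hB]
  exact ⟨hAB, hBA⟩

end Pseudoinverse

section Averaging

variable (V : Type*) [Fintype V]

noncomputable def averagingMatrix : Matrix V V ℝ := Matrix.of fun _ _ => (Fintype.card V : ℝ)⁻¹

variable {V}

theorem averagingMatrix_transpose : (averagingMatrix V)ᵀ = averagingMatrix V := rfl

theorem averagingMatrix_mulVec_apply (x : V → ℝ) (u : V) :
    (averagingMatrix V *ᵥ x) u = (Fintype.card V : ℝ)⁻¹ * ∑ v, x v := by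
  simp [averagingMatrix, mulVec, dotProduct, Finset.mul_sum]

theorem averagingMatrix_mul_self :
    averagingMatrix V * averagingMatrix V = averagingMatrix V := by
  ext u v
  have : Nonempty V := ⟨u⟩
  simp [averagingMatrix, mul_apply]

end Averaging

namespace SimpleGraph

variable {V : Type*} [Fintype V] [DecidableEq V]

section Laplacian

variable (G : SimpleGraph V) [DecidableRel G.Adj]

theorem lapMatrix_mul_averagingMatrix : G.lapMatrix ℝ * averagingMatrix V = 0 := by
  ext u v
  have := congrFun (G.lapMatrix_mulVec_const_eq_zero (R := ℝ)) u
  simp_all [averagingMatrix, mul_apply, mulVec, dotProduct, ← Finset.sum_mul]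

theorem averagingMatrix_mul_lapMatrix : averagingMatrix V * G.lapMatrix ℝ = 0 := by
  rw [← averagingMatrix_transpose, ← (G.isSymm_lapMatrix (R := ℝ)).eq, ← transpose_mul,
    lapMatrix_mul_averagingMatrix, transpose_zero]

variable {G}

theorem Connected.isUnit_det_lapMatrix_add_averagingMatrix (hG : G.Connected) :
    IsUnit (G.lapMatrix ℝ + averagingMatrix V).det := by
  have : Nonempty V := hG.nonempty
  rw [isUnit_iff_ne_zero, Ne, ← exists_mulVec_eq_zero_iff]
  rintro ⟨x, hx0, hx⟩
  have hPx : averagingMatrix V *ᵥ x = 0 := by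
    simpa [add_mulVec, mulVec_add, mulVec_mulVec, averagingMatrix_mul_lapMatrix,
      averagingMatrix_mul_self] using congrArg (averagingMatrix V *ᵥ ·) hx
  have hLx : G.lapMatrix ℝ *ᵥ x = 0 := by simpa [add_mulVec, hPx] using hx
  obtain ⟨u⟩ := ‹Nonempty V›
  have hconst : ∀ v, x v = x u := fun v =>
    (lapMatrix_mulVec_eq_zero_iff_forall_reachable G).1 hLx v u (hG.preconnected v u)
  have hu : x u = 0 := by
    have hsum := congrFun hPx u
    have hcard : (Fintype.card V : ℝ) ≠ 0 := by positivity
    simpa [averagingMatrix_mulVec_apply, hconst, hcard] using hsum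
  exact hx0 (funext fun v => (hconst v).trans hu)

theorem Connected.lapMatrix_mul_pinv_and_pinv_mul (hG : G.Connected) :
    G.lapMatrix ℝ * pinv (G.lapMatrix ℝ) = 1 - averagingMatrix V ∧
      pinv (G.lapMatrix ℝ) * G.lapMatrix ℝ = 1 - averagingMatrix V :=
  mul_pinv_and_pinv_mul_eq_one_sub averagingMatrix_transpose averagingMatrix_mul_self
    G.lapMatrix_mul_averagingMatrix G.averagingMatrix_mul_lapMatrix
    hG.isUnit_det_lapMatrix_add_averagingMatrix

end Laplacian

def energy (G : SimpleGraph V) [DecidableRel G.Adj] (x : V → ℝ) : ℝ :=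
  x ⬝ᵥ G.lapMatrix ℝ *ᵥ x

section Energy

variable (G : SimpleGraph V) [DecidableRel G.Adj]

theorem energy_eq_sum (x : V → ℝ) :
    G.energy x = (∑ i, ∑ j, if G.Adj i j then (x i - x j) ^ 2 else 0) / 2 := by
  rw [energy, ← toLinearMap₂'_apply', lapMatrix_toLinearMap₂']

theorem energy_nonneg (x : V → ℝ) : 0 ≤ G.energy x := by
  rw [energy_eq_sum]
  positivity

theorem energy_eq_zero_iff (x : V → ℝ) :
    G.energy x = 0 ↔ ∀ i j, G.Reachable i j → x i = x j := by
  rw [energy, ← toLinearMap₂'_apply', lapMatrix_toLinearMap₂'_apply'_eq_zero_iff_forall_reachable]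

theorem energy_mono {H : SimpleGraph V} [DecidableRel H.Adj] (hGH : G ≤ H) (x : V → ℝ) :
    G.energy x ≤ H.energy x := by
  rw [energy_eq_sum, energy_eq_sum]
  gcongr with i _ j _
  split_ifs with hG hH hH
  exacts [le_rfl, absurd (hGH hG) hH, sq_nonneg _, le_rfl]

theorem energy_eq_energy_deleteEdges_add {i j : V} (hij : G.Adj i j) (x : V → ℝ) :
    G.energy x = (G.deleteEdges {s(i, j)}).energy x + (x i - x j) ^ 2 := by
  have hsplit : ∀ u v, (if G.Adj u v then (x u - x v) ^ 2 else 0) =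
      (if (G.deleteEdges {s(i, j)}).Adj u v then (x u - x v) ^ 2 else 0) +
        ((if u = i ∧ v = j then (x u - x v) ^ 2 else 0) +
          if u = j ∧ v = i then (x u - x v) ^ 2 else 0) := by
    intro u v
    by_cases hu : u = i <;> by_cases hv : v = j <;> by_cases hu' : u = j <;>
      by_cases hv' : v = i <;> simp_all [hij.ne, hij.ne.symm, hij.symm]
  simp only [energy_eq_sum, hsplit, Finset.sum_add_distrib, ite_and, Finset.sum_ite_irrel,
    Finset.sum_const_zero, Finset.sum_ite_eq', Finset.mem_univ, if_true]
  ring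

end Energy

theorem energy_eq_sub_of_lapMatrix_mulVec {G : SimpleGraph V} [DecidableRel G.Adj] {i j : V}
    {x : V → ℝ} (hx : G.lapMatrix ℝ *ᵥ x = Pi.single i 1 - Pi.single j 1) :
    G.energy x = x i - x j := by
  simp [energy, hx, dotProduct_sub]

variable {G : SimpleGraph V} {i j : V}

theorem resDist_eq_dotProduct [DecidableRel G.Adj] :
    resDist G i j = (Pi.single i 1 - Pi.single j 1) ⬝ᵥ
      pinv (G.lapMatrix ℝ) *ᵥ (Pi.single i 1 - Pi.single j 1) := by
  unfold resDist
  congr!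

theorem averagingMatrix_mulVec_single_sub_single :
    averagingMatrix V *ᵥ (Pi.single i 1 - Pi.single j 1) = 0 := by
  ext u
  simp [averagingMatrix_mulVec_apply, Finset.sum_sub_distrib]

namespace Connected

variable (hG : G.Connected)
include hG

theorem exists_lapMatrix_mulVec_eq [DecidableRel G.Adj] (i j : V) :
    ∃ x, G.lapMatrix ℝ *ᵥ x = Pi.single i 1 - Pi.single j 1 :=
  ⟨pinv (G.lapMatrix ℝ) *ᵥ (Pi.single i 1 - Pi.single j 1), by
    rw [mulVec_mulVec, hG.lapMatrix_mul_pinv_and_pinv_mul.1, sub_mulVec, one_mulVec,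
      averagingMatrix_mulVec_single_sub_single, sub_zero]⟩

theorem resDist_eq_sub [DecidableRel G.Adj] {x : V → ℝ}
    (hx : G.lapMatrix ℝ *ᵥ x = Pi.single i 1 - Pi.single j 1) : resDist G i j = x i - x j := by
  rw [resDist_eq_dotProduct, ← hx, mulVec_mulVec, hG.lapMatrix_mul_pinv_and_pinv_mul.2, sub_mulVec,
    one_mulVec, hx]
  simp [dotProduct_sub, averagingMatrix_mulVec_apply]

theorem resDist_nonneg (i j : V) : 0 ≤ resDist G i j := by
  classical
  obtain ⟨x, hx⟩ := hG.exists_lapMatrix_mulVec_eq i j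
  rw [hG.resDist_eq_sub hx, ← energy_eq_sub_of_lapMatrix_mulVec hx]
  exact G.energy_nonneg x

theorem sq_sub_le_resDist_mul_energy [DecidableRel G.Adj] (i j : V) (z : V → ℝ) :
    (z i - z j) ^ 2 ≤ resDist G i j * G.energy z := by
  obtain ⟨x, hx⟩ := hG.exists_lapMatrix_mulVec_eq i j
  have hxz : x ⬝ᵥ G.lapMatrix ℝ *ᵥ z = z i - z j := by
    rw [dotProduct_mulVec, ← mulVec_transpose, (G.isSymm_lapMatrix (R := ℝ)).eq, dotProduct_comm,
      hx]
    simp [dotProduct_sub]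
  have hquad : ∀ c : ℝ, G.energy (c • x - z) =
      resDist G i j * (c * c) + (-2 * (z i - z j)) * c + G.energy z := by
    intro c
    have hzx : z ⬝ᵥ G.lapMatrix ℝ *ᵥ x = z i - z j := by simp [hx, dotProduct_sub]
    rw [hG.resDist_eq_sub hx, ← energy_eq_sub_of_lapMatrix_mulVec hx]
    simp only [energy, mulVec_sub, mulVec_smul, dotProduct_sub, sub_dotProduct, dotProduct_smul,
      smul_dotProduct, hxz, hzx, smul_eq_mul]
    ring
  have hdiscrim := discrim_le_zero fun c => hquad c ▸ G.energy_nonneg (c • x - z)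
  rw [discrim] at hdiscrim
  linarith

theorem resDist_pos (hij : i ≠ j) : 0 < resDist G i j := by
  classical
  have h := hG.sq_sub_le_resDist_mul_energy i j (Pi.single i 1)
  simp only [Pi.single_eq_same, Pi.single_eq_of_ne hij.symm, sub_zero, one_pow] at h
  exact (hG.resDist_nonneg i j).lt_of_ne (by rintro h0; rw [← h0, zero_mul] at h; linarith)

theorem resDist_le_of_le {H : SimpleGraph V} (hGH : G ≤ H) : resDist H i j ≤ resDist G i j := by
  classical
  have hH := hG.mono hGH
  obtain ⟨x, hx⟩ := hH.exists_lapMatrix_mulVec_eq i j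
  have hΩ := hH.resDist_eq_sub hx
  have hE := energy_eq_sub_of_lapMatrix_mulVec hx
  have h := hG.sq_sub_le_resDist_mul_energy i j x
  have := G.energy_mono hGH x
  nlinarith [hG.resDist_nonneg i j, hH.resDist_nonneg i j]

theorem resDist_mul_one_sub [DecidableRel G.Adj] (hij : G.Adj i j) {x : V → ℝ}
    (hx : G.lapMatrix ℝ *ᵥ x = Pi.single i 1 - Pi.single j 1) :
    resDist G i j * (1 - resDist G i j) = (G.deleteEdges {s(i, j)}).energy x := by
  have h := G.energy_eq_energy_deleteEdges_add hij x
  rw [energy_eq_sub_of_lapMatrix_mulVec hx, ← hG.resDist_eq_sub hx] at h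
  linarith

theorem resDist_le_one_of_adj (hij : G.Adj i j) : resDist G i j ≤ 1 := by
  classical
  obtain ⟨x, hx⟩ := hG.exists_lapMatrix_mulVec_eq i j
  have h := hG.resDist_mul_one_sub hij hx
  have := (G.deleteEdges {s(i, j)}).energy_nonneg x
  nlinarith [hG.resDist_pos hij.ne]

theorem resDist_eq_one_iff_isBridge (hij : G.Adj i j) :
    resDist G i j = 1 ↔ G.IsBridge s(i, j) := by
  classical
  set H := G.deleteEdges {s(i, j)}
  rw [isBridge_iff]
  constructor
  · intro h1 hreach
    obtain ⟨x, hx⟩ := hG.exists_lapMatrix_mulVec_eq i j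
    have hE : H.energy x = 0 := by rw [← hG.resDist_mul_one_sub hij hx, h1, sub_self, mul_zero]
    have hdrop := hG.resDist_eq_sub hx
    rw [(H.energy_eq_zero_iff x).1 hE i j hreach, sub_self, h1] at hdrop
    exact one_ne_zero hdrop
  · intro hbridge
    let z : V → ℝ := fun u => if H.Reachable u i then 1 else 0
    have hzi : z i = 1 := if_pos (Reachable.refl i)
    have hzj : z j = 0 := if_neg fun h => hbridge h.symm
    have hEH : H.energy z = 0 := by
      refine (H.energy_eq_zero_iff z).2 fun u v huv => ?_
      simp only [z, show H.Reachable u i ↔ H.Reachable v i from ⟨huv.symm.trans, huv.trans⟩]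
    have h := hG.sq_sub_le_resDist_mul_energy i j z
    rw [G.energy_eq_energy_deleteEdges_add hij, hEH, hzi, hzj] at h
    have := hG.resDist_le_one_of_adj hij
    nlinarith

end Connected

end SimpleGraph

section Cyclicity

variable {V : Type*} [Fintype V] [DecidableEq V] {G H : SimpleGraph V}

noncomputable def edgeCyclicity (G : SimpleGraph V) : Sym2 V → ℝ :=
  Sym2.lift ⟨fun i j => 1 / resDist G i j - 1, fun i j => by dsimp only; rw [resDist_comm]⟩

theorem edgeCyclicity_mk (i j : V) : edgeCyclicity G s(i, j) = 1 / resDist G i j - 1 := rfl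

theorem cyclicity_eq_sum_s7 [DecidableRel G.Adj] :
    cyclicity G = ∑ e ∈ G.edgeFinset, edgeCyclicity G e := by
  unfold cyclicity
  congr!

namespace SimpleGraph.Connected

variable (hG : G.Connected)
include hG

theorem edgeCyclicity_nonneg {e : Sym2 V} (he : e ∈ G.edgeSet) : 0 ≤ edgeCyclicity G e := by
  induction e using Sym2.ind with
  | h i j =>
    rw [edgeCyclicity_mk, sub_nonneg, le_div_iff₀ (hG.resDist_pos (G.ne_of_adj he)), one_mul]
    exact hG.resDist_le_one_of_adj he

theorem edgeCyclicity_eq_zero_iff {e : Sym2 V} (he : e ∈ G.edgeSet) :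
    edgeCyclicity G e = 0 ↔ G.IsBridge e := by
  induction e using Sym2.ind with
  | h i j =>
    rw [edgeCyclicity_mk, sub_eq_zero, one_div, inv_eq_one, hG.resDist_eq_one_iff_isBridge he]

theorem edgeCyclicity_le_of_le (hGH : G ≤ H) {e : Sym2 V} (he : e ∈ G.edgeSet) :
    edgeCyclicity G e ≤ edgeCyclicity H e := by
  induction e using Sym2.ind with
  | h i j =>
    rw [edgeCyclicity_mk, edgeCyclicity_mk]
    gcongr
    · exact (hG.mono hGH).resDist_pos (G.ne_of_adj he)
    · exact hG.resDist_le_of_le hGH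

theorem edgeCyclicity_pos_of_notMem (hGH : G ≤ H) {e : Sym2 V} (he : e ∈ H.edgeSet)
    (heG : e ∉ G.edgeSet) : 0 < edgeCyclicity H e := by
  have hH := hG.mono hGH
  refine (hH.edgeCyclicity_nonneg he).lt_of_ne fun h => ?_
  induction e using Sym2.ind with
  | h i j =>
    have hle : G ≤ H.deleteEdges {s(i, j)} := by
      rw [← deleteEdges_eq_self.2 (Set.disjoint_singleton_right.2 heG)]
      exact deleteEdges_mono hGH
    exact isBridge_iff.1 ((hH.edgeCyclicity_eq_zero_iff he).1 h.symm)
      ((hG.preconnected i j).mono hle)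

theorem cyclicity_nonneg : 0 ≤ cyclicity G := by
  classical
  rw [cyclicity_eq_sum_s7]
  exact Finset.sum_nonneg fun e he => hG.edgeCyclicity_nonneg (G.mem_edgeFinset.1 he)

theorem cyclicity_eq_zero_iff_isTree : cyclicity G = 0 ↔ G.IsTree := by
  classical
  rw [cyclicity_eq_sum_s7, Finset.sum_eq_zero_iff_of_nonneg fun e he =>
      hG.edgeCyclicity_nonneg (G.mem_edgeFinset.1 he), isTree_iff, and_iff_right hG,
    isAcyclic_iff_forall_isBridge]
  simp only [mem_edgeFinset]
  exact forall₂_congr fun e he => hG.edgeCyclicity_eq_zero_iff he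

theorem cyclicity_lt_of_lt (hGH : G < H) : cyclicity G < cyclicity H := by
  classical
  obtain ⟨e, heH, heG⟩ := Finset.exists_of_ssubset (edgeFinset_ssubset_edgeFinset.2 hGH)
  rw [cyclicity_eq_sum_s7, cyclicity_eq_sum_s7]
  calc ∑ e ∈ G.edgeFinset, edgeCyclicity G e
      ≤ ∑ e ∈ G.edgeFinset, edgeCyclicity H e :=
        Finset.sum_le_sum fun e he => hG.edgeCyclicity_le_of_le hGH.le (G.mem_edgeFinset.1 he)
    _ < ∑ e ∈ H.edgeFinset, edgeCyclicity H e :=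
        Finset.sum_lt_sum_of_subset (edgeFinset_mono hGH.le) heH heG
          (hG.edgeCyclicity_pos_of_notMem hGH.le (H.mem_edgeFinset.1 heH)
            (mt G.mem_edgeFinset.2 heG))
          fun e he _ => (hG.mono hGH.le).edgeCyclicity_nonneg (H.mem_edgeFinset.1 he)

theorem cyclicity_le_of_le (hGH : G ≤ H) : cyclicity G ≤ cyclicity H := by
  rcases hGH.lt_or_eq with hlt | rfl
  exacts [(hG.cyclicity_lt_of_lt hlt).le, le_rfl]

end SimpleGraph.Connected

end Cyclicity

section CompleteBipartite

variable {V : Type*}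

abbrev completeBipartiteOn (s : Finset V) : SimpleGraph V :=
  SimpleGraph.fromRel fun u v => u ∈ s ∧ v ∉ s

variable {s : Finset V} {i j u v : V}

theorem completeBipartiteOn_adj :
    (completeBipartiteOn s).Adj u v ↔ (u ∈ s ∧ v ∉ s) ∨ (u ∉ s ∧ v ∈ s) := by
  simp only [completeBipartiteOn, SimpleGraph.fromRel_adj]
  constructor
  · tauto
  · rintro (h | h) <;> refine ⟨fun huv => ?_, by tauto⟩ <;> subst huv <;> tauto

theorem completeBipartiteOn_connected (hi : i ∈ s) (hj : j ∉ s) :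
    (completeBipartiteOn s).Connected := by
  have hreach : ∀ u, (completeBipartiteOn s).Reachable u i := fun u => by
    by_cases hu : u ∈ s
    · exact (completeBipartiteOn_adj.2 (.inl ⟨hu, hj⟩)).reachable.trans
        (completeBipartiteOn_adj.2 (.inr ⟨hj, hi⟩)).reachable
    · exact (completeBipartiteOn_adj.2 (.inr ⟨hu, hi⟩)).reachable
  have : Nonempty V := ⟨i⟩
  exact ⟨fun u v => (hreach u).trans (hreach v).symm⟩

variable [Fintype V] [DecidableEq V]

theorem neighborFinset_completeBipartiteOn_of_mem (hu : u ∈ s) :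
    (completeBipartiteOn s).neighborFinset u = sᶜ := by
  ext v
  rw [SimpleGraph.mem_neighborFinset, completeBipartiteOn_adj]
  simp [hu]

theorem neighborFinset_completeBipartiteOn_of_notMem (hu : u ∉ s) :
    (completeBipartiteOn s).neighborFinset u = s := by
  ext v
  rw [SimpleGraph.mem_neighborFinset, completeBipartiteOn_adj]
  simp [hu]

theorem resDist_completeBipartiteOn (hi : i ∈ s) (hj : j ∉ s) :
    resDist (completeBipartiteOn s) i j = ((#s : ℝ) + #sᶜ - 1) / (#s * #sᶜ) := by
  have ha : (#s : ℝ) ≠ 0 := Nat.cast_ne_zero.2 (Finset.card_ne_zero.2 ⟨i, hi⟩)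
  have hb : (#sᶜ : ℝ) ≠ 0 :=
    Nat.cast_ne_zero.2 (Finset.card_ne_zero.2 ⟨j, Finset.mem_compl.2 hj⟩)
  have hij : i ≠ j := ne_of_mem_of_not_mem hi hj
  -- by symmetry, the potential is constant on `s \ {i}` and on `sᶜ \ {j}`
  let x : V → ℝ := fun u =>
    (if u = i then (#sᶜ : ℝ)⁻¹ else 0) - (if u = j then (#s : ℝ)⁻¹ else 0) +
      if u ∈ s then 0 else ((#s : ℝ) * #sᶜ)⁻¹
  have hsum : ∑ w ∈ s, x w = (#sᶜ : ℝ)⁻¹ := by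
    simp [x, Finset.sum_add_distrib, Finset.sum_sub_distrib, hi, hj, Finset.sum_ite_of_true]
  have hsumc : ∑ w ∈ sᶜ, x w = 0 := by
    simp [x, Finset.sum_add_distrib, Finset.sum_sub_distrib, hi, hj, Finset.sum_ite_of_false]
    field_simp
    ring
  have hx : (completeBipartiteOn s).lapMatrix ℝ *ᵥ x = Pi.single i 1 - Pi.single j 1 := by
    ext u
    rw [SimpleGraph.lapMatrix_mulVec_apply, ← SimpleGraph.card_neighborFinset_eq_degree]
    by_cases hu : u ∈ s
    · rw [neighborFinset_completeBipartiteOn_of_mem hu, hsumc]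
      simp [x, hu, Pi.single_apply, ne_of_mem_of_not_mem hu hj, hb]
    · rw [neighborFinset_completeBipartiteOn_of_notMem hu, hsum]
      simp [x, hu, Pi.single_apply, (ne_of_mem_of_not_mem hi hu).symm]
      split_ifs <;> field_simp <;> ring
  rw [(completeBipartiteOn_connected hi hj).resDist_eq_sub hx]
  simp [x, hi, hj, hij, hij.symm]
  field_simp
  ring

theorem edgeFinset_completeBipartiteOn :
    (completeBipartiteOn s).edgeFinset = (s ×ˢ sᶜ).image fun p => s(p.1, p.2) := by
  ext e
  induction e using Sym2.ind with
  | h u v =>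
    simp only [SimpleGraph.mem_edgeFinset, SimpleGraph.mem_edgeSet, completeBipartiteOn_adj,
      Finset.mem_image, Finset.mem_product, Finset.mem_compl, Prod.exists, Sym2.eq_iff]
    constructor
    · rintro (⟨hu, hv⟩ | ⟨hu, hv⟩)
      · exact ⟨u, v, ⟨hu, hv⟩, .inl ⟨rfl, rfl⟩⟩
      · exact ⟨v, u, ⟨hv, hu⟩, .inr ⟨rfl, rfl⟩⟩
    · rintro ⟨a, b, ⟨ha, hb⟩, ⟨rfl, rfl⟩ | ⟨rfl, rfl⟩⟩
      exacts [.inl ⟨ha, hb⟩, .inr ⟨hb, ha⟩]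

theorem cyclicity_completeBipartiteOn :
    cyclicity (completeBipartiteOn s) =
      (#s : ℝ) * #sᶜ * ((#s : ℝ) * #sᶜ - #s - #sᶜ + 1) / ((#s : ℝ) + #sᶜ - 1) := by
  have hinj : Set.InjOn (fun p : V × V => s(p.1, p.2)) ↑(s ×ˢ sᶜ) := by
    rintro ⟨a, b⟩ hab ⟨a', b'⟩ hab' h
    simp only [Finset.coe_product, Set.mem_prod, Finset.mem_coe, Finset.mem_compl] at hab hab'
    rcases Sym2.eq_iff.1 h with ⟨rfl, rfl⟩ | ⟨rfl, rfl⟩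
    · rfl
    · exact absurd hab.1 hab'.2
  rw [cyclicity_eq_sum_s7, edgeFinset_completeBipartiteOn, Finset.sum_image hinj]
  rcases (s ×ˢ sᶜ).eq_empty_or_nonempty with hempty | ⟨⟨i, j⟩, hij⟩
  · obtain h | h := Finset.product_eq_empty.1 hempty <;> simp [h]
  · obtain ⟨hi, hj⟩ := Finset.mem_product.1 hij
    have hconst : ∀ p ∈ s ×ˢ sᶜ, edgeCyclicity (completeBipartiteOn s) s(p.1, p.2) =
        (#s : ℝ) * #sᶜ / ((#s : ℝ) + #sᶜ - 1) - 1 := fun p hp => by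
      obtain ⟨hp₁, hp₂⟩ := Finset.mem_product.1 hp
      rw [edgeCyclicity_mk, resDist_completeBipartiteOn hp₁ (Finset.mem_compl.1 hp₂), one_div_div]
    have ha : (1 : ℝ) ≤ #s := Nat.one_le_cast.2 (Finset.card_pos.2 ⟨i, hi⟩)
    have hb : (1 : ℝ) ≤ #sᶜ := Nat.one_le_cast.2 (Finset.card_pos.2 ⟨j, hj⟩)
    have hab : (#s : ℝ) + #sᶜ - 1 ≠ 0 := by linarith
    rw [Finset.sum_congr rfl hconst, Finset.sum_const, Finset.card_product, nsmul_eq_mul]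
    push_cast
    field_simp
    ring

end CompleteBipartite

theorem stmt7 {V : Type*} [Fintype V] [DecidableEq V] (G : SimpleGraph V) (hG : G.Connected)
    (s : Finset V)
    (hbip : ∀ u v : V, G.Adj u v → ((u ∈ s ∧ v ∉ s) ∨ (u ∉ s ∧ v ∈ s)))
    (n₁ n₂ : ℕ) (h₁ : n₁ = s.card) (h₂ : n₂ = sᶜ.card) :
    (0 ≤ cyclicity G ∧ cyclicity G ≤
        (n₁ : ℝ) * n₂ * ((n₁ : ℝ) * n₂ - n₁ - n₂ + 1) / ((n₁ : ℝ) + n₂ - 1)) ∧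
    (cyclicity G = 0 ↔ G.IsTree) ∧
    (cyclicity G = (n₁ : ℝ) * n₂ * ((n₁ : ℝ) * n₂ - n₁ - n₂ + 1) / ((n₁ : ℝ) + n₂ - 1) ↔
      G = SimpleGraph.fromRel (fun u v => u ∈ s ∧ v ∉ s)) := by
  subst h₁ h₂
  rw [← cyclicity_completeBipartiteOn]
  have hle : G ≤ completeBipartiteOn s := fun u v h => completeBipartiteOn_adj.2 (hbip u v h)
  refine ⟨⟨hG.cyclicity_nonneg, hG.cyclicity_le_of_le hle⟩, hG.cyclicity_eq_zero_iff_isTree,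
    fun heq => ?_, congrArg cyclicity⟩
  by_contra hne
  exact (hG.cyclicity_lt_of_lt (hle.lt_of_ne hne)).ne heq
end

section
/- Let G be a connected r-regular simple graph with n vertices, where r ≥ 2. Then C(G) ≤ n·r·(r−1)/4. -/
open Matrix Finset

/-!
For an edge `ij` put `x = e_i - e_j`. Since `Lz = 0` forces `z i = z j`, the vector `x` is
orthogonal to the kernel of the Laplacian `L`, hence `x = L y` for `y = L⁺ x`, and then
`Ω(i,j) = xᵀ L⁺ x = yᵀ L y`. Cauchy–Schwarz for the semidefinite form `L` gives
`(xᵀ x)² = (xᵀ L y)² ≤ (xᵀ L x)(yᵀ L y)`, that is `4 ≤ (d_i + d_j + 2) Ω(i,j)`.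
In an `r`-regular graph each of the `n r / 2` edges therefore contributes `σ - 1 ≤ (r - 1) / 2`.
-/

namespace Matrix

variable {n : Type*} [Fintype n]

theorem single_sub_single_dotProduct_mulVec [DecidableEq n] {R : Type*} [CommRing R]
    (M : Matrix n n R) (i j : n) :
    (Pi.single i 1 - Pi.single j 1) ⬝ᵥ M *ᵥ (Pi.single i 1 - Pi.single j 1)
      = M i i - M i j - M j i + M j j := by
  simp only [sub_dotProduct, mulVec_sub, dotProduct_sub, single_one_dotProduct,
    mulVec_single_one, col_apply]
  ring

theorem PosSemidef.sq_dotProduct_mulVec_le {A : Matrix n n ℝ} (hA : A.PosSemidef)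
    (x y : n → ℝ) : (x ⬝ᵥ A *ᵥ y) ^ 2 ≤ (x ⬝ᵥ A *ᵥ x) * (y ⬝ᵥ A *ᵥ y) := by
  have hsymm : y ⬝ᵥ A *ᵥ x = x ⬝ᵥ A *ᵥ y := by
    rw [dotProduct_comm, dotProduct_mulVec, ← mulVec_transpose,
      ← conjTranspose_eq_transpose_of_trivial, hA.isHermitian.eq]
  have hquad (t : ℝ) :
      0 ≤ (y ⬝ᵥ A *ᵥ y) * (t * t) + 2 * (x ⬝ᵥ A *ᵥ y) * t + x ⬝ᵥ A *ᵥ x := by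
    have h := hA.dotProduct_mulVec_nonneg (x + t • y)
    simp only [star_trivial, mulVec_add, mulVec_smul, dotProduct_add, add_dotProduct,
      dotProduct_smul, smul_dotProduct, smul_eq_mul, hsymm] at h
    linarith
  have h := discrim_le_zero hquad
  rw [discrim] at h
  linarith

theorem mulVec_mulVec_eq_self_of_forall_mulVec_eq_zero {A B : Matrix n n ℝ} (hA : A.IsSymm)
    (hABA : A * B * A = A) (hAB : (A * B)ᵀ = A * B) {x : n → ℝ}
    (hx : ∀ z, A *ᵥ z = 0 → x ⬝ᵥ z = 0) : A *ᵥ (B *ᵥ x) = x := by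
  have hAAB : A * (A * B) = A := by
    have h := congrArg transpose hABA
    rwa [transpose_mul, hAB, hA.eq] at h
  set w := x - A *ᵥ (B *ᵥ x)
  have hw : A *ᵥ w = 0 := by
    rw [mulVec_sub, mulVec_mulVec, mulVec_mulVec, Matrix.mul_assoc, hAAB, sub_self]
  have hww : w ⬝ᵥ w = 0 := by
    rw [sub_dotProduct, hx w hw, dotProduct_comm, dotProduct_mulVec, ← mulVec_transpose, hA.eq,
      hw, zero_dotProduct, sub_self]
  exact (sub_eq_zero.mp (dotProduct_self_eq_zero.mp hww)).symm

variable [DecidableEq n]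

theorem IsHermitian.exists_moorePenrose {A : Matrix n n ℝ} (hA : A.IsHermitian) :
    ∃ B, A * B * A = A ∧ B * A * B = B ∧ (A * B)ᵀ = A * B ∧ (B * A)ᵀ = B * A := by
  have hcont (f : ℝ → ℝ) : ContinuousOn f (spectrum ℝ A) := (finite_spectrum A).continuousOn f
  have hmul (f g : ℝ → ℝ) : cfc f A * cfc g A = cfc (fun x => f x * g x) A :=
    (cfc_mul f g A (hcont f) (hcont g)).symm
  have htrans (f : ℝ → ℝ) : (cfc f A)ᵀ = cfc f A := by
    rw [← conjTranspose_eq_transpose_of_trivial]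
    exact cfc_predicate f A
  have hA_cfc : cfc (fun x : ℝ => x) A = A := cfc_id' ℝ A hA
  have hAB : A * cfc (fun x : ℝ => x⁻¹) A = cfc (fun x : ℝ => x * x⁻¹) A := by
    rw [← hmul, hA_cfc]
  have hBA : cfc (fun x : ℝ => x⁻¹) A * A = cfc (fun x : ℝ => x⁻¹ * x) A := by
    rw [← hmul, hA_cfc]
  -- `B` inverts `A` on its range and vanishes on its kernel, because `0⁻¹ = 0`.
  refine ⟨cfc (fun x : ℝ => x⁻¹) A, ?_, ?_, by rw [hAB, htrans], by rw [hBA, htrans]⟩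
  · calc A * cfc (fun x : ℝ => x⁻¹) A * A
        = cfc (fun x : ℝ => x * x⁻¹) A * cfc (fun x : ℝ => x) A := by rw [hAB, hA_cfc]
      _ = A := by rw [hmul]; simp only [mul_inv_mul_cancel, hA_cfc]
  · rw [hBA, hmul]
    simpa only [inv_inv] using congrArg (cfc · A) (funext fun x : ℝ => mul_inv_mul_cancel x⁻¹)

theorem IsHermitian.pinv_spec {A : Matrix n n ℝ} (hA : A.IsHermitian) :
    A * pinv A * A = A ∧ pinv A * A * pinv A = pinv A ∧
      (A * pinv A)ᵀ = A * pinv A ∧ (pinv A * A)ᵀ = pinv A * A := by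
  have h := hA.exists_moorePenrose
  rw [pinv, dif_pos h]
  exact h.choose_spec

theorem PosSemidef.sq_dotProduct_self_le_mul_pinv {A : Matrix n n ℝ} (hA : A.PosSemidef)
    {x : n → ℝ} (hx : ∀ z, A *ᵥ z = 0 → x ⬝ᵥ z = 0) :
    (x ⬝ᵥ x) ^ 2 ≤ (x ⬝ᵥ A *ᵥ x) * (x ⬝ᵥ pinv A *ᵥ x) := by
  have hsymm : A.IsSymm := by
    rw [IsSymm, ← conjTranspose_eq_transpose_of_trivial]
    exact hA.isHermitian
  obtain ⟨hApA, -, hAp, -⟩ := hA.isHermitian.pinv_spec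
  have hy := mulVec_mulVec_eq_self_of_forall_mulVec_eq_zero hsymm hApA hAp hx
  have h := hA.sq_dotProduct_mulVec_le x (pinv A *ᵥ x)
  rwa [hy, dotProduct_comm (pinv A *ᵥ x)] at h

end Matrix

namespace SimpleGraph

variable {V : Type*} [Fintype V] {G : SimpleGraph V} [DecidableRel G.Adj]

theorem IsRegularOfDegree.two_mul_card_edgeFinset {r : ℕ} (hreg : G.IsRegularOfDegree r) :
    2 * #G.edgeFinset = Fintype.card V * r := by
  rw [← sum_degrees_eq_twice_card_edges, sum_congr rfl fun v _ => hreg v, sum_const,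
    card_univ, smul_eq_mul]

variable [DecidableEq V] {i j : V}

theorem resDist_eq_dotProduct_pinv (G : SimpleGraph V) [DecidableRel G.Adj] (i j : V) :
    resDist G i j = (Pi.single i 1 - Pi.single j 1) ⬝ᵥ
      pinv (G.lapMatrix ℝ) *ᵥ (Pi.single i 1 - Pi.single j 1) := by
  unfold resDist
  congr!

theorem single_sub_single_dotProduct_eq_zero_of_lapMatrix_mulVec_eq_zero (hij : G.Adj i j)
    {z : V → ℝ} (hz : G.lapMatrix ℝ *ᵥ z = 0) : (Pi.single i 1 - Pi.single j 1) ⬝ᵥ z = 0 := by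
  rw [sub_dotProduct, single_one_dotProduct, single_one_dotProduct,
    G.lapMatrix_mulVec_eq_zero_iff_forall_adj.mp hz i j hij, sub_self]

theorem single_sub_single_dotProduct_lapMatrix_mulVec (hij : G.Adj i j) :
    (Pi.single i 1 - Pi.single j 1) ⬝ᵥ G.lapMatrix ℝ *ᵥ (Pi.single i 1 - Pi.single j 1)
      = G.degree i + G.degree j + 2 := by
  rw [single_sub_single_dotProduct_mulVec]
  simp only [lapMatrix, degMatrix, Matrix.sub_apply, diagonal_apply_eq,
    diagonal_apply_ne _ hij.ne, diagonal_apply_ne _ hij.ne', adjMatrix_apply, G.irrefl, hij,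
    hij.symm, if_true, if_false]
  ring

theorem four_le_mul_resDist (hij : G.Adj i j) :
    4 ≤ (G.degree i + G.degree j + 2) * resDist G i j := by
  have h := (G.posSemidef_lapMatrix ℝ).sq_dotProduct_self_le_mul_pinv
    (fun _ hz => single_sub_single_dotProduct_eq_zero_of_lapMatrix_mulVec_eq_zero hij hz)
  rw [single_sub_single_dotProduct_lapMatrix_mulVec hij, ← resDist_eq_dotProduct_pinv] at h
  norm_num [sub_dotProduct, dotProduct_sub, hij.ne, hij.ne'] at h
  exact h

theorem one_div_resDist_le (hij : G.Adj i j) :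
    1 / resDist G i j ≤ (G.degree i + G.degree j + 2) / 4 := by
  have h := four_le_mul_resDist hij
  have hpos : 0 < resDist G i j := pos_of_mul_pos_right (four_pos.trans_le h) (by positivity)
  rw [div_le_div_iff₀ hpos four_pos]
  linarith

theorem IsRegularOfDegree.cyclicity_le {r : ℕ} (hreg : G.IsRegularOfDegree r) :
    cyclicity G ≤ Fintype.card V * r * ((r : ℝ) - 1) / 4 := by
  have hcard : (2 * #G.edgeFinset : ℝ) = Fintype.card V * r := by
    exact_mod_cast hreg.two_mul_card_edgeFinset
  calc cyclicity G ≤ #G.edgeFinset • (((r : ℝ) - 1) / 2) := by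
        unfold cyclicity
        -- `cyclicity` sums over the edges computed with a classical decidability instance.
        refine (le_of_eq (by congr!)).trans (sum_le_card_nsmul G.edgeFinset _ _ fun e he => ?_)
        induction e using Sym2.ind with | _ a b => ?_
        have h := one_div_resDist_le (mem_edgeFinset.mp he)
        rw [hreg a, hreg b] at h
        rw [Sym2.lift_mk]
        linarith
    _ = Fintype.card V * r * ((r : ℝ) - 1) / 4 := by
        rw [nsmul_eq_mul]
        linear_combination ((r : ℝ) - 1) / 4 * hcard

end SimpleGraph

theorem stmt11_general {V : Type*} [Fintype V] [DecidableEq V] (G : SimpleGraph V) [DecidableRel G.Adj]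
    (r n : ℕ) (hreg : G.IsRegularOfDegree r) (hn : n = Fintype.card V) :
    cyclicity G ≤ (n : ℝ) * r * ((r : ℝ) - 1) / 4 :=
  hn ▸ hreg.cyclicity_le

theorem stmt11 {V : Type*} [Fintype V] [DecidableEq V] (G : SimpleGraph V) [DecidableRel G.Adj]
    (hG : G.Connected) (r n : ℕ) (hr : 2 ≤ r) (hreg : G.IsRegularOfDegree r)
    (hn : n = Fintype.card V) :
    cyclicity G ≤ (n : ℝ) * r * ((r : ℝ) - 1) / 4 :=
  stmt11_general G r n hreg hn
end

section
/- Let G be a finite connected simple graph of order n ≥ 3 that is not complete. Then the number of unordered pairs of distinct vertices {u,v} with Ω_G(u,v) = 2/n is at most (n² − 5n + 8)/2. -/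
open Matrix Finset

/-!
If `Ω(u,v) = 2/n`, put `x = e_u - e_v` and `y = L⁺x`. Since `x` is orthogonal to the kernel of
the Laplacian `L` (the locally constant vectors), `Ly = x`, and Cauchy–Schwarz for the
semidefinite form of `L` gives
`4 = (xᵀx)² = (xᵀLy)² ≤ (xᵀLx)(yᵀLy) = (d_u + d_v + 2a_uv) · Ω(u,v)`.
Hence `d_u + d_v + 2a_uv ≥ 2n`, which forces `u` and `v` to be adjacent to every other vertex.
A non-complete graph has two non-adjacent vertices, so it has at most `n - 2` such universal
vertices, and at most `C(n-2, 2) ≤ (n² - 5n + 8)/2` pairs with `Ω = 2/n`.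
-/

namespace Matrix

variable {n : Type*} [Fintype n]

theorem PosSemidef.dotProduct_mulVec_mul_self_le {M : Matrix n n ℝ} (hM : M.PosSemidef)
    (x y : n → ℝ) : (x ⬝ᵥ M *ᵥ y) * (x ⬝ᵥ M *ᵥ y) ≤ (x ⬝ᵥ M *ᵥ x) * (y ⬝ᵥ M *ᵥ y) := by
  let := M.toSeminormedAddCommGroup hM
  let := M.toInnerProductSpace hM
  have hinner (a b : n → ℝ) : inner ℝ a b = a ⬝ᵥ M *ᵥ b := by rw [dotProduct_comm]; rfl
  simpa only [hinner] using real_inner_mul_inner_self_le x y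

/-- `L * B` is the orthogonal projection onto `range L = (ker L)ᗮ`. -/
theorem IsSymm.mulVec_mulVec_eq_self {L B : Matrix n n ℝ} (hL : L.IsSymm) (hLBL : L * B * L = L)
    (hLB : (L * B)ᵀ = L * B) {x : n → ℝ} (hx : ∀ w, L *ᵥ w = 0 → x ⬝ᵥ w = 0) :
    L *ᵥ (B *ᵥ x) = x := by
  set P := L * B
  have hLP : L * P = L := by
    calc L * P = (P * L)ᵀ := by rw [transpose_mul, hL.eq, hLB]
      _ = L := by rw [hLBL, hL.eq]
  have hPP : P * P = P := by rw [← Matrix.mul_assoc, hLBL]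
  set w := x - P *ᵥ x
  have hLw : L *ᵥ w = 0 := by rw [mulVec_sub, mulVec_mulVec, hLP, sub_self]
  have hPw : P *ᵥ w = 0 := by rw [mulVec_sub, mulVec_mulVec, hPP, sub_self]
  have hww : w ⬝ᵥ w = 0 := by
    calc w ⬝ᵥ w = x ⬝ᵥ w - x ⬝ᵥ P *ᵥ w := by
          rw [sub_dotProduct, dotProduct_mulVec, ← mulVec_transpose, hLB]
      _ = 0 := by rw [hx w hLw, hPw, dotProduct_zero, sub_zero]
  rw [mulVec_mulVec]
  exact (sub_eq_zero.mp (dotProduct_self_eq_zero.mp hww)).symm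

theorem PosSemidef.dotProduct_self_sq_le {L B : Matrix n n ℝ} (hL : L.PosSemidef)
    (hLBL : L * B * L = L) (hLB : (L * B)ᵀ = L * B) {x : n → ℝ}
    (hx : ∀ w, L *ᵥ w = 0 → x ⬝ᵥ w = 0) :
    (x ⬝ᵥ x) ^ 2 ≤ (x ⬝ᵥ L *ᵥ x) * (x ⬝ᵥ B *ᵥ x) := by
  have hsymm : L.IsSymm := (conjTranspose_eq_transpose_of_trivial L).symm.trans hL.isHermitian
  have hy : L *ᵥ (B *ᵥ x) = x := hsymm.mulVec_mulVec_eq_self hLBL hLB hx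
  have := hL.dotProduct_mulVec_mul_self_le x (B *ᵥ x)
  rwa [hy, dotProduct_comm (B *ᵥ x), ← sq] at this

end Matrix

theorem pinv_penrose_of_ne_zero {n : Type*} [Fintype n] [DecidableEq n] {A : Matrix n n ℝ}
    (h : pinv A ≠ 0) : A * pinv A * A = A ∧ (A * pinv A)ᵀ = A * pinv A := by
  unfold pinv at h ⊢
  split_ifs at h ⊢ with hex
  · exact ⟨hex.choose_spec.1, hex.choose_spec.2.2.1⟩
  · exact absurd rfl h

namespace SimpleGraph

section Resistance

variable {V : Type*} [Fintype V] [DecidableEq V] (G : SimpleGraph V) [DecidableRel G.Adj]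

theorem resDist_def (i j : V) :
    resDist G i j = (Pi.single i 1 - Pi.single j 1) ⬝ᵥ
      pinv (G.lapMatrix ℝ) *ᵥ (Pi.single i 1 - Pi.single j 1) := by
  unfold resDist
  congr!

theorem dotProduct_lapMatrix_mulVec_single_sub_single {u v : V} (huv : u ≠ v) :
    (Pi.single u 1 - Pi.single v 1) ⬝ᵥ G.lapMatrix ℝ *ᵥ (Pi.single u 1 - Pi.single v 1)
      = G.degree u + G.degree v + 2 * G.adjMatrix ℝ u v := by
  simp [lapMatrix, degMatrix, mulVec_sub, mulVec_single, huv, huv.symm, G.adj_comm v u]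
  split_ifs <;> ring

theorem single_sub_single_dotProduct_eq_zero {u v : V} (huv : G.Reachable u v) {w : V → ℝ}
    (hw : G.lapMatrix ℝ *ᵥ w = 0) : (Pi.single u 1 - Pi.single v 1) ⬝ᵥ w = 0 := by
  rw [lapMatrix_mulVec_eq_zero_iff_forall_reachable] at hw
  simp [sub_dotProduct, hw u v huv]

theorem four_le_mul_resDist_s14 {u v : V} (huv : u ≠ v) (hreach : G.Reachable u v)
    (hΩ : resDist G u v ≠ 0) :
    4 ≤ (G.degree u + G.degree v + 2 * G.adjMatrix ℝ u v) * resDist G u v := by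
  rw [resDist_def] at hΩ ⊢
  have hpinv : pinv (G.lapMatrix ℝ) ≠ 0 := by
    rintro h
    simp [h] at hΩ
  obtain ⟨hLBL, hLB⟩ := pinv_penrose_of_ne_zero hpinv
  have hx : (Pi.single u 1 - Pi.single v 1 : V → ℝ) ⬝ᵥ (Pi.single u 1 - Pi.single v 1) = 2 := by
    simp [dotProduct_sub, huv, huv.symm]
    norm_num
  have := (posSemidef_lapMatrix ℝ G).dotProduct_self_sq_le hLBL hLB
    (fun w hw => G.single_sub_single_dotProduct_eq_zero hreach hw)
  rw [hx, G.dotProduct_lapMatrix_mulVec_single_sub_single huv] at this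
  linarith

theorem isUniversal_of_resDist_eq_two_div_card {u v : V} (huv : u ≠ v)
    (hreach : G.Reachable u v) (hΩ : resDist G u v = 2 / Fintype.card V) : G.IsUniversal u := by
  by_contra hu
  have hdeg_u : (G.degree u : ℝ) + 2 ≤ Fintype.card V := by
    have := (G.degree_lt_card_sub_one u).mpr hu
    exact_mod_cast (by omega : G.degree u + 2 ≤ Fintype.card V)
  have hdeg_v : (G.degree v : ℝ) + 1 ≤ Fintype.card V := by
    exact_mod_cast G.degree_lt_card_verts v
  have hadj : G.adjMatrix ℝ u v ≤ 1 := by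
    rw [adjMatrix_apply]
    split_ifs <;> norm_num
  have hcard : (0 : ℝ) < Fintype.card V := by exact_mod_cast Fintype.card_pos_iff.mpr ⟨u⟩
  have h4 := G.four_le_mul_resDist_s14 huv hreach (by rw [hΩ]; positivity)
  rw [hΩ, mul_div_assoc', le_div_iff₀ hcard] at h4
  linarith

end Resistance

theorem card_filter_isUniversal_le {V : Type*} [Fintype V] {G : SimpleGraph V}
    [DecidablePred G.IsUniversal] (hG : G ≠ ⊤) :
    #{v | G.IsUniversal v} ≤ Fintype.card V - 2 := by
  classical
  obtain ⟨a, b, hab, hnadj⟩ := ne_top_iff_exists_not_adj.mp hG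
  have hsub : ({v | G.IsUniversal v} : Finset V) ⊆ univ \ {a, b} := by
    intro w hw
    simp only [mem_filter, mem_univ, true_and] at hw
    simp only [mem_sdiff, mem_univ, mem_insert, mem_singleton, true_and, not_or]
    refine ⟨?_, ?_⟩ <;> rintro rfl
    · exact hnadj (hw hab)
    · exact hnadj (hw hab.symm).symm
  simpa [card_univ_sdiff, card_pair hab] using card_le_card hsub

end SimpleGraph

theorem Sym2.ncard_le_choose_two {α : Type*} [DecidableEq α] {s : Finset α} {S : Set (Sym2 α)}
    (hS : ∀ p ∈ S, ¬ p.IsDiag ∧ ∀ a ∈ p, a ∈ s) : S.ncard ≤ (#s).choose 2 := by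
  rw [← Sym2.card_image_offDiag, ← Set.ncard_coe_finset]
  refine Set.ncard_le_ncard (fun p hp => ?_) (Finset.finite_toSet _)
  induction p using Sym2.ind with
  | _ a b =>
    obtain ⟨hdiag, hmem⟩ := hS _ hp
    simp only [coe_image, Set.mem_image, mem_coe, mem_offDiag]
    exact ⟨(a, b), ⟨hmem a (Sym2.mem_mk_left a b), hmem b (Sym2.mem_mk_right a b),
      fun h => hdiag (Sym2.mk_isDiag_iff.mpr h)⟩, rfl⟩

theorem Nat.cast_choose_two_sub_two_le (n : ℕ) :
    ((n - 2).choose 2 : ℝ) ≤ ((n : ℝ) ^ 2 - 5 * n + 8) / 2 := by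
  rw [Nat.cast_choose_two]
  rcases le_or_gt 2 n with hn | hn
  · rw [Nat.cast_sub hn]
    nlinarith
  · rw [Nat.sub_eq_zero_of_le hn.le, Nat.cast_zero]
    nlinarith [sq_nonneg ((n : ℝ) - 5 / 2)]

theorem stmt14_general {V : Type*} [Fintype V] [DecidableEq V] (G : SimpleGraph V)
    (hG : G.Connected) (n : ℕ) (hn : n = Fintype.card V) (hnc : G ≠ ⊤) :
    (({p : Sym2 V | ¬ p.IsDiag ∧
        Sym2.lift ⟨resDist G, fun a b => resDist_comm G a b⟩ p = 2 / (n : ℝ)}.ncard : ℝ))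
      ≤ ((n : ℝ) ^ 2 - 5 * n + 8) / 2 := by
  classical
  subst hn
  calc _ ≤ ((#{v | G.IsUniversal v}).choose 2 : ℝ) := by
        refine mod_cast Sym2.ncard_le_choose_two ?_
        rintro ⟨a, b⟩ ⟨hdiag, hΩ⟩
        have hab : a ≠ b := fun h => hdiag (Sym2.mk_isDiag_iff.mpr h)
        refine ⟨hdiag, fun c hc => mem_filter.mpr ⟨mem_univ c, ?_⟩⟩
        rcases Sym2.mem_iff.mp hc with rfl | rfl
        · exact G.isUniversal_of_resDist_eq_two_div_card hab (hG.preconnected _ _) hΩ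
        · exact G.isUniversal_of_resDist_eq_two_div_card hab.symm (hG.preconnected _ _)
            (by rwa [resDist_comm])
    _ ≤ ((Fintype.card V - 2).choose 2 : ℝ) := by
        exact_mod_cast Nat.choose_le_choose 2 (SimpleGraph.card_filter_isUniversal_le hnc)
    _ ≤ _ := Nat.cast_choose_two_sub_two_le _

theorem stmt14 {V : Type*} [Fintype V] [DecidableEq V] (G : SimpleGraph V)
    (hG : G.Connected) (n : ℕ) (hn : n = Fintype.card V) (h3 : 3 ≤ n) (hnc : G ≠ ⊤) :
    (({p : Sym2 V | ¬ p.IsDiag ∧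
        Sym2.lift ⟨resDist G, fun a b => resDist_comm G a b⟩ p = 2 / (n : ℝ)}.ncard : ℝ))
      ≤ ((n : ℝ) ^ 2 - 5 * n + 8) / 2 :=
  stmt14_general G hG n hn hnc
end

section
/- Let G be a finite connected simple graph with n ≥ 3 vertices and m edges. Then C(G) ≤ n(m − n + 1)/2, with equality if and only if G is a tree or G is the complete graph K_n. -/
open Matrix Finset

/-!
For an edge `ab`, the potential `u` of a unit current from `a` to `b` has energy
`uᵀ L u = Ω(a,b) = u a - u b`, and the edge `ab` alone contributes `Ω(a,b)²` to that energy, so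
`Ω(a,b) ≤ 1`; Dirichlet's principle `(x a - x b)² ≤ Ω(a,b) · xᵀ L x` with `x = e_a - e_b` gives
`Ω(a,b) (d_a + d_b + 2) ≥ 4`, so `Ω(a,b) ≥ 2/n`. On `[2/n, 1]` the convex function `r ↦ 1/r - 1`
lies below its chord `r ↦ (n/2)(1 - r)`, touching it only at the endpoints; summing over the edges
and using Foster's theorem `Σ Ω = n - 1` gives `C(G) ≤ (n/2)(m - n + 1)`.

Equality holds iff every edge has `Ω = 1`, i.e. is a bridge, or `Ω = 2/n`, which forces both of
its endpoints to be universal. If some edge `ab` is not a bridge, then `a` and `b` are universal,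
every other edge at `a` lies on a triangle through `b`, hence is not a bridge either, and so every
vertex is universal: `G = K_n`. Conversely, trees have `Ω ≡ 1` and `K_n` has `Ω ≡ 2/n`.
-/

section Pinv

variable {n : Type*} [Fintype n] [DecidableEq n]

theorem pinv_spec {A : Matrix n n ℝ} (hA : A.IsHermitian) :
    A * pinv A * A = A ∧ (A * pinv A)ᵀ = A * pinv A ∧ (pinv A * A)ᵀ = pinv A * A := by
  have h := exists_penrose_of_isHermitian hA
  rw [pinv, dif_pos h]
  exact ⟨h.choose_spec.1, h.choose_spec.2.2⟩

end Pinv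

open SimpleGraph

theorem SimpleGraph.Reachable.eq_of_forall_adj {V β : Type*} {H : SimpleGraph V} {f : V → β}
    (hf : ∀ u v, H.Adj u v → f u = f v) {u v : V} (h : H.Reachable u v) : f u = f v := by
  obtain ⟨w⟩ := h
  induction w with
  | nil => rfl
  | cons hadj _ ih => exact (hf _ _ hadj).trans ih

theorem SimpleGraph.Connected.isTree_or_eq_top {V : Type*} {G : SimpleGraph V}
    (hG : G.Connected)
    (h : ∀ a b, G.Adj a b → G.IsBridge s(a, b) ∨ G.IsUniversal a ∧ G.IsUniversal b) :
    G.IsTree ∨ G = ⊤ := by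
  by_cases hbr : ∀ a b, G.Adj a b → G.IsBridge s(a, b)
  · exact Or.inl ⟨hG, isAcyclic_iff_forall_adj_isBridge.mpr hbr⟩
  push Not at hbr
  obtain ⟨a, b, hab, hnb⟩ := hbr
  obtain ⟨ha, hb⟩ := (h a b hab).resolve_left hnb
  refine Or.inr (eq_top_iff_forall_isUniversal.mpr fun v => ?_)
  by_cases hva : v = a
  · exact hva ▸ ha
  by_cases hvb : v = b
  · exact hvb ▸ hb
  -- the edge `av` is not a bridge, thanks to the path `a - b - v`
  refine ((h a v (ha (Ne.symm hva))).resolve_left ?_).2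
  rw [isBridge_iff, not_not]
  have hab' : (G.deleteEdges {s(a, v)}).Adj a b := by
    simpa [Sym2.eq_iff, Ne.symm hva, Ne.symm hvb] using hab
  have hbv : (G.deleteEdges {s(a, v)}).Adj b v := by
    simpa [Sym2.eq_iff, hab.ne.symm, Ne.symm hvb] using hb (Ne.symm hvb)
  exact hab'.reachable.trans hbv.reachable

section EdgeSum

variable {V : Type*} [Fintype V] [DecidableEq V] (G : SimpleGraph V) [DecidableRel G.Adj]

theorem sum_darts_eq_two_mul_sum_edgeFinset (g : Sym2 V → ℝ) :
    ∑ d : G.Dart, g d.edge = 2 * ∑ e ∈ G.edgeFinset, g e := by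
  rw [← sum_fiberwise_of_maps_to (g := Dart.edge) (t := G.edgeFinset)
    fun d _ => mem_edgeFinset.mpr d.edge_mem, mul_sum]
  refine sum_congr rfl fun e he => ?_
  rw [sum_congr rfl fun d hd => congrArg g (mem_filter.mp hd).2, sum_const,
    G.dart_edge_fiber_card e (mem_edgeFinset.mp he), two_nsmul, two_mul]

theorem sum_adj_eq_two_mul_sum_edgeFinset (f : V → V → ℝ) (hf : ∀ a b, f a b = f b a) :
    ∑ i, ∑ j, (if G.Adj i j then f i j else 0)
      = 2 * ∑ e ∈ G.edgeFinset, Sym2.lift ⟨f, hf⟩ e := by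
  rw [← sum_darts_eq_two_mul_sum_edgeFinset, ← sum_product', univ_product_univ, ← sum_filter]
  exact sum_bij' (fun p hp => ⟨p, (mem_filter.mp hp).2⟩) (fun d _ => d.toProd)
    (fun _ _ => mem_univ _) (fun d _ => mem_filter.mpr ⟨mem_univ _, d.adj⟩)
    (fun _ _ => rfl) (fun _ _ => rfl) (fun _ _ => rfl)

theorem lapMatrix_mulVec_apply_eq_sum_adj (y : V → ℝ) (i : V) :
    (G.lapMatrix ℝ *ᵥ y) i = ∑ j, if G.Adj i j then y i - y j else 0 := by
  rw [lapMatrix_mulVec_apply, degree_eq_sum_if_adj, sum_mul, neighborFinset_eq_filter,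
    sum_filter, ← sum_sub_distrib]
  exact sum_congr rfl fun j _ => by split_ifs <;> ring

theorem dotProduct_lapMatrix_mulVec (x y : V → ℝ) :
    x ⬝ᵥ (G.lapMatrix ℝ *ᵥ y) = ∑ e ∈ G.edgeFinset,
      Sym2.lift ⟨fun a b => (x a - x b) * (y a - y b), fun a b => by ring⟩ e := by
  have hswap : ∑ i, ∑ j, (if G.Adj i j then x j * (y j - y i) else 0)
      = ∑ i, ∑ j, (if G.Adj i j then x i * (y i - y j) else 0) := by
    rw [sum_comm]
    exact sum_congr rfl fun i _ => sum_congr rfl fun j _ => if_congr (G.adj_comm j i) rfl rfl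
  have hsplit : ∑ i, ∑ j, (if G.Adj i j then (x i - x j) * (y i - y j) else 0)
      = ∑ i, ∑ j, (if G.Adj i j then x i * (y i - y j) else 0)
        + ∑ i, ∑ j, (if G.Adj i j then x j * (y j - y i) else 0) := by
    rw [← sum_add_distrib]
    exact sum_congr rfl fun i _ => by
      rw [← sum_add_distrib]; exact sum_congr rfl fun j _ => by split_ifs <;> ring
  have hdot : x ⬝ᵥ (G.lapMatrix ℝ *ᵥ y)
      = ∑ i, ∑ j, (if G.Adj i j then x i * (y i - y j) else 0) := by
    simp only [dotProduct, lapMatrix_mulVec_apply_eq_sum_adj, mul_sum, mul_ite, mul_zero]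
  have h := sum_adj_eq_two_mul_sum_edgeFinset G (fun a b => (x a - x b) * (y a - y b))
    fun a b => by ring
  rw [hsplit, hswap] at h
  linarith

theorem dotProduct_lapMatrix_mulVec_self (x : V → ℝ) :
    x ⬝ᵥ (G.lapMatrix ℝ *ᵥ x) = ∑ e ∈ G.edgeFinset,
      Sym2.lift ⟨fun a b => (x a - x b) ^ 2, fun a b => by ring⟩ e := by
  rw [dotProduct_lapMatrix_mulVec]
  exact sum_congr rfl fun e _ => e.ind fun a b => (sq _).symm

variable {G} in
theorem dotProduct_lapMatrix_mulVec_self_eq_sq_iff {a b : V} (hab : G.Adj a b) (x : V → ℝ) :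
    x ⬝ᵥ (G.lapMatrix ℝ *ᵥ x) = (x a - x b) ^ 2
      ↔ ∀ u v, (G.deleteEdges {s(a, b)}).Adj u v → x u = x v := by
  rw [dotProduct_lapMatrix_mulVec_self,
    ← add_sum_erase _ _ (G.mem_edgeFinset.mpr (G.mem_edgeSet.mpr hab)), Sym2.lift_mk, add_eq_left,
    sum_eq_zero_iff_of_nonneg fun e _ => e.ind fun _ _ => sq_nonneg _]
  simp only [Sym2.forall, mem_erase, ne_eq, mem_edgeFinset, mem_edgeSet, Sym2.lift_mk,
    sq_eq_zero_iff, sub_eq_zero, deleteEdges_adj, Set.mem_singleton_iff]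
  grind

end EdgeSum

section Laplacian

variable {V : Type*} [Fintype V] [DecidableEq V] {G : SimpleGraph V} [DecidableRel G.Adj]

theorem eq_const_of_lapMatrix_mulVec_eq_zero (hG : G.Connected) {x : V → ℝ}
    (hx : G.lapMatrix ℝ *ᵥ x = 0) : ∃ c, x = fun _ => c := by
  obtain ⟨v₀⟩ := hG.nonempty
  exact ⟨x v₀, funext fun v =>
    (lapMatrix_mulVec_eq_zero_iff_forall_reachable G).mp hx v v₀ (hG.preconnected v v₀)⟩

theorem mul_lapMatrix_mulVec_of_penrose (hG : G.Connected) {B : Matrix V V ℝ}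
    (h₁ : G.lapMatrix ℝ * B * G.lapMatrix ℝ = G.lapMatrix ℝ)
    (h₂ : (B * G.lapMatrix ℝ)ᵀ = B * G.lapMatrix ℝ) (x : V → ℝ) :
    (B * G.lapMatrix ℝ) *ᵥ x = x - fun _ => (∑ v, x v) / Fintype.card V := by
  set L := G.lapMatrix ℝ
  obtain ⟨c, hc⟩ := eq_const_of_lapMatrix_mulVec_eq_zero hG
    (x := x - (B * L) *ᵥ x) (by rw [mulVec_sub, mulVec_mulVec, ← Matrix.mul_assoc, h₁, sub_self])
  have hsum : ∑ v, ((B * L) *ᵥ x) v = 0 := by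
    have h1 : L *ᵥ (fun _ => (1 : ℝ)) = 0 := lapMatrix_mulVec_const_eq_zero G
    calc ∑ v, ((B * L) *ᵥ x) v = (fun _ => (1 : ℝ)) ⬝ᵥ ((B * L) *ᵥ x) := by simp [dotProduct]
      _ = 0 := by rw [dotProduct_mulVec, ← mulVec_transpose, h₂, ← mulVec_mulVec, h1,
        mulVec_zero, zero_dotProduct]
  have hc' : c = (∑ v, x v) / Fintype.card V := by
    have hn : (Fintype.card V : ℝ) ≠ 0 := by
      have := hG.nonempty; positivity
    have := congrArg (fun y : V → ℝ => ∑ v, y v) hc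
    simp only [Pi.sub_apply, sum_sub_distrib, hsum, sub_zero, sum_const, card_univ,
      nsmul_eq_mul] at this
    rw [this]; field_simp
  rw [← hc', ← hc, sub_sub_cancel]

theorem pinv_mul_lapMatrix_mulVec (hG : G.Connected) (x : V → ℝ) :
    (pinv (G.lapMatrix ℝ) * G.lapMatrix ℝ) *ᵥ x
      = x - fun _ => (∑ v, x v) / Fintype.card V :=
  have h := pinv_spec (isHermitian_lapMatrix ℝ G)
  mul_lapMatrix_mulVec_of_penrose hG h.1 h.2.2 x

theorem lapMatrix_mul_pinv_mulVec (hG : G.Connected) (x : V → ℝ) :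
    (G.lapMatrix ℝ * pinv (G.lapMatrix ℝ)) *ᵥ x
      = x - fun _ => (∑ v, x v) / Fintype.card V := by
  set L := G.lapMatrix ℝ
  obtain ⟨h₁, h₂, -⟩ := pinv_spec (isHermitian_lapMatrix ℝ G)
  have hL : Lᵀ = L := isSymm_lapMatrix ℝ G
  have hcomm : (pinv L)ᵀ * L = L * pinv L := by
    rw [← h₂, transpose_mul, hL]
  have h₁' : L * (pinv L)ᵀ * L = L := by
    have := congrArg transpose h₁
    rwa [transpose_mul, transpose_mul, hL, ← Matrix.mul_assoc] at this
  rw [← hcomm]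
  exact mul_lapMatrix_mulVec_of_penrose hG h₁' (by rw [hcomm, h₂]) x

theorem lapMatrix_mulVec_pinv_mulVec (hG : G.Connected) {x : V → ℝ} (hx : ∑ v, x v = 0) :
    G.lapMatrix ℝ *ᵥ (pinv (G.lapMatrix ℝ) *ᵥ x) = x := by
  rw [mulVec_mulVec, lapMatrix_mul_pinv_mulVec hG, hx, zero_div, sub_eq_self]
  rfl

theorem trace_pinv_mul_lapMatrix (hG : G.Connected) :
    (pinv (G.lapMatrix ℝ) * G.lapMatrix ℝ).trace = Fintype.card V - 1 := by
  have hn : (Fintype.card V : ℝ) ≠ 0 := by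
    have := hG.nonempty; positivity
  have hdiag (k : V) : (pinv (G.lapMatrix ℝ) * G.lapMatrix ℝ) k k = 1 - 1 / Fintype.card V := by
    have := congrFun (pinv_mul_lapMatrix_mulVec hG (Pi.single k 1)) k
    simpa [mulVec_single_one] using this
  simp only [Matrix.trace, Matrix.diag, hdiag, sum_const, card_univ, nsmul_eq_mul]
  field_simp

end Laplacian

noncomputable def unitDiff {V : Type*} [DecidableEq V] (a b : V) : V → ℝ :=
  Pi.single a 1 - Pi.single b 1

/-- The vertex potentials when a unit current enters at `a` and leaves at `b`. -/
noncomputable def potential {V : Type*} [Fintype V] [DecidableEq V] (G : SimpleGraph V)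
    [DecidableRel G.Adj] (a b : V) : V → ℝ :=
  pinv (G.lapMatrix ℝ) *ᵥ unitDiff a b

section Resistance

variable {V : Type*} [Fintype V] [DecidableEq V] {G : SimpleGraph V} [DecidableRel G.Adj]

theorem sum_unitDiff (a b : V) : ∑ v, unitDiff a b v = 0 := by
  simp [unitDiff, sum_sub_distrib]

theorem unitDiff_dotProduct (a b : V) (x : V → ℝ) : unitDiff a b ⬝ᵥ x = x a - x b := by
  simp [unitDiff, sub_dotProduct, single_dotProduct]

theorem lapMatrix_mulVec_potential (hG : G.Connected) (a b : V) :
    G.lapMatrix ℝ *ᵥ potential G a b = unitDiff a b :=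
  lapMatrix_mulVec_pinv_mulVec hG (sum_unitDiff a b)

theorem resDist_eq_potential_sub (a b : V) :
    resDist G a b = potential G a b a - potential G a b b := by
  rw [← unitDiff_dotProduct, resDist, potential, unitDiff]
  congr!

theorem dotProduct_lapMatrix_mulVec_potential (hG : G.Connected) (a b : V) (x : V → ℝ) :
    x ⬝ᵥ (G.lapMatrix ℝ *ᵥ potential G a b) = x a - x b := by
  rw [lapMatrix_mulVec_potential hG, dotProduct_comm, unitDiff_dotProduct]

theorem resDist_eq_dotProduct_lapMatrix (hG : G.Connected) (a b : V) :
    resDist G a b = potential G a b ⬝ᵥ (G.lapMatrix ℝ *ᵥ potential G a b) := by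
  rw [dotProduct_lapMatrix_mulVec_potential hG, resDist_eq_potential_sub]

theorem resDist_nonneg (hG : G.Connected) (a b : V) : 0 ≤ resDist G a b := by
  rw [resDist_eq_dotProduct_lapMatrix hG]
  simpa using (posSemidef_lapMatrix ℝ G).dotProduct_mulVec_nonneg (potential G a b)

/-- Dirichlet's principle. -/
theorem sq_sub_le_resDist_mul (hG : G.Connected) (a b : V) (x : V → ℝ) :
    (x a - x b) ^ 2 ≤ resDist G a b * (x ⬝ᵥ (G.lapMatrix ℝ *ᵥ x)) := by
  have h := LinearMap.BilinForm.apply_sq_le_of_symm (B := (G.lapMatrix ℝ).toBilin')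
    (fun y => by
      simpa [toBilin'_apply'] using (posSemidef_lapMatrix ℝ G).dotProduct_mulVec_nonneg y)
    (LinearMap.BilinForm.isSymm_iff.mp
      (isSymm_toBilin'_iff_isSymm.mpr (isSymm_lapMatrix ℝ G))) x (potential G a b)
  simp only [toBilin'_apply', dotProduct_lapMatrix_mulVec_potential hG] at h
  rwa [resDist_eq_potential_sub, mul_comm]

end Resistance

section EdgeResistance

variable {V : Type*} [Fintype V] [DecidableEq V] {G : SimpleGraph V} [DecidableRel G.Adj]
  {a b : V}

theorem sq_sub_le_dotProduct_lapMatrix_mulVec_self (hab : G.Adj a b) (x : V → ℝ) :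
    (x a - x b) ^ 2 ≤ x ⬝ᵥ (G.lapMatrix ℝ *ᵥ x) := by
  rw [dotProduct_lapMatrix_mulVec_self]
  exact single_le_sum (f := Sym2.lift ⟨fun a b => (x a - x b) ^ 2, fun a b => by ring⟩)
    (fun e _ => e.ind fun _ _ => sq_nonneg _) (G.mem_edgeFinset.mpr (G.mem_edgeSet.mpr hab))

theorem resDist_le_one (hG : G.Connected) (hab : G.Adj a b) : resDist G a b ≤ 1 := by
  have h := sq_sub_le_dotProduct_lapMatrix_mulVec_self hab (potential G a b)
  rw [← resDist_eq_potential_sub, ← resDist_eq_dotProduct_lapMatrix hG] at h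
  nlinarith [resDist_nonneg hG a b]

theorem four_le_resDist_mul (hG : G.Connected) (hab : G.Adj a b) :
    4 ≤ resDist G a b * (G.degree a + G.degree b + 2) := by
  have h := sq_sub_le_resDist_mul hG a b (unitDiff a b)
  have hquad : unitDiff a b ⬝ᵥ (G.lapMatrix ℝ *ᵥ unitDiff a b)
      = G.degree a + G.degree b + 2 := by
    simp [unitDiff, mulVec_sub, lapMatrix, degMatrix, hab, hab.symm,
      hab.ne, hab.ne.symm]
    ring
  have hab' : unitDiff a b a - unitDiff a b b = 2 := by
    simp [unitDiff, hab.ne, hab.ne.symm]; norm_num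
  rw [hquad, hab'] at h
  linarith

theorem two_div_card_le_resDist (hG : G.Connected) (hab : G.Adj a b) :
    2 / Fintype.card V ≤ resDist G a b := by
  have hn : (0 : ℝ) < Fintype.card V := by
    have := hG.nonempty; positivity
  have hdeg (v : V) : (G.degree v : ℝ) + 1 ≤ Fintype.card V := by
    exact_mod_cast G.degree_lt_card_verts v
  rw [div_le_iff₀ hn]
  nlinarith [four_le_resDist_mul hG hab, resDist_nonneg hG a b, hdeg a, hdeg b]

theorem isUniversal_of_resDist_eq_two_div_card (hG : G.Connected) (hab : G.Adj a b)
    (h : resDist G a b = 2 / Fintype.card V) : G.IsUniversal a ∧ G.IsUniversal b := by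
  have hn : (0 : ℝ) < Fintype.card V := by
    have := hG.nonempty; positivity
  have hdeg (v : V) : G.degree v + 1 ≤ Fintype.card V := G.degree_lt_card_verts v
  have hsum : 2 * (Fintype.card V : ℝ) ≤ G.degree a + G.degree b + 2 := by
    have := four_le_resDist_mul hG hab
    rw [h, div_mul_eq_mul_div, le_div_iff₀ hn] at this
    linarith
  have hsum' : 2 * Fintype.card V ≤ G.degree a + G.degree b + 2 := by exact_mod_cast hsum
  rw [← degree_eq_card_sub_one, ← degree_eq_card_sub_one]
  have := hdeg a; have := hdeg b
  omega

theorem resDist_eq_one_iff_isBridge (hG : G.Connected) (hab : G.Adj a b) :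
    resDist G a b = 1 ↔ G.IsBridge s(a, b) := by
  rw [isBridge_iff]
  set H := G.deleteEdges {s(a, b)}
  constructor
  · intro h hreach
    have hx : potential G a b a - potential G a b b = 1 := by
      rw [← resDist_eq_potential_sub, h]
    have hconst := (dotProduct_lapMatrix_mulVec_self_eq_sq_iff hab (potential G a b)).mp (by
      rw [← resDist_eq_dotProduct_lapMatrix hG, hx, h, one_pow])
    linarith [hreach.eq_of_forall_adj hconst]
  · intro hnr
    classical
    let χ : V → ℝ := fun v => if H.Reachable a v then 1 else 0
    have hχ : χ a - χ b = 1 := by simp [χ, hnr]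
    have hconst (u v : V) (huv : H.Adj u v) : χ u = χ v := by
      have : H.Reachable a u ↔ H.Reachable a v :=
        ⟨fun h => h.trans huv.reachable, fun h => h.trans huv.symm.reachable⟩
      simp only [χ, this]
    have hquad := (dotProduct_lapMatrix_mulVec_self_eq_sq_iff hab χ).mpr hconst
    have := sq_sub_le_resDist_mul hG a b χ
    rw [hquad, hχ] at this
    linarith [resDist_le_one hG hab]

end EdgeResistance

noncomputable def edgeResDist {V : Type*} [Fintype V] [DecidableEq V] (G : SimpleGraph V) :
    Sym2 V → ℝ :=
  Sym2.lift ⟨resDist G, resDist_comm G⟩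

section Foster

variable {V : Type*} [Fintype V] [DecidableEq V] {G : SimpleGraph V} [DecidableRel G.Adj]

theorem resDist_eq_sum_single (a b : V) :
    resDist G a b = ∑ k, ((Pi.single k 1 : V → ℝ) a - (Pi.single k 1 : V → ℝ) b)
      * ((pinv (G.lapMatrix ℝ) *ᵥ Pi.single k 1) a
        - (pinv (G.lapMatrix ℝ) *ᵥ Pi.single k 1) b) := by
  simp [resDist_eq_potential_sub, potential, unitDiff, mulVec_sub, Pi.single_apply, sub_mul,
    sum_sub_distrib]
  ring

/-- Foster's theorem. -/
theorem sum_edgeResDist (hG : G.Connected) :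
    ∑ e ∈ G.edgeFinset, edgeResDist G e = Fintype.card V - 1 := by
  calc ∑ e ∈ G.edgeFinset, edgeResDist G e
      = ∑ k, (Pi.single k 1 : V → ℝ)
          ⬝ᵥ (G.lapMatrix ℝ *ᵥ (pinv (G.lapMatrix ℝ) *ᵥ Pi.single k 1)) := by
        simp only [dotProduct_lapMatrix_mulVec]
        rw [sum_comm]
        exact sum_congr rfl fun e _ => e.ind fun a b => resDist_eq_sum_single a b
    _ = (pinv (G.lapMatrix ℝ) * G.lapMatrix ℝ).trace := by
        rw [trace_mul_comm]
        simp_rw [mulVec_mulVec, single_dotProduct, mulVec_single_one, one_mul]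
        rfl
    _ = Fintype.card V - 1 := trace_pinv_mul_lapMatrix hG

end Foster

theorem resDist_top {V : Type*} [Fintype V] [DecidableEq V] {a b : V} (hab : a ≠ b) :
    resDist (⊤ : SimpleGraph V) a b = 2 / Fintype.card V := by
  have : Nonempty V := ⟨a⟩
  have hn : (Fintype.card V : ℝ) ≠ 0 := by positivity
  have hL : (⊤ : SimpleGraph V).lapMatrix ℝ *ᵥ unitDiff a b
      = (Fintype.card V : ℝ) • unitDiff a b := by
    ext i
    have hsum := sum_unitDiff a b
    have hterm (j : V) : (if (⊤ : SimpleGraph V).Adj i j then unitDiff a b i - unitDiff a b j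
        else 0) = unitDiff a b i - unitDiff a b j := by
      by_cases hij : i = j <;> simp [hij]
    simp only [lapMatrix_mulVec_apply_eq_sum_adj, hterm, sum_sub_distrib, hsum, sum_const,
      card_univ, nsmul_eq_mul, sub_zero, Pi.smul_apply, smul_eq_mul]
  have hpot : potential ⊤ a b = (Fintype.card V : ℝ)⁻¹ • unitDiff a b := by
    have h := pinv_mul_lapMatrix_mulVec connected_top (unitDiff a b)
    rw [sum_unitDiff, zero_div, ← mulVec_mulVec, hL, mulVec_smul] at h
    have h' : (Fintype.card V : ℝ) • potential ⊤ a b = unitDiff a b := by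
      rw [potential, h]
      exact sub_zero _
    rw [← h', smul_smul, inv_mul_cancel₀ hn, one_smul]
  rw [resDist_eq_potential_sub, hpot]
  simp [unitDiff, hab, hab.symm]
  field_simp
  ring

section ConvexBound

variable {c r : ℝ}

theorem mul_one_sub_sub_one_div_sub_one (hr : r ≠ 0) :
    c * (1 - r) - (1 / r - 1) = (1 - r) * (c - 1 / r) := by
  field_simp

theorem one_div_sub_one_le (hc : 0 < c) (h₁ : 1 / c ≤ r) (h₂ : r ≤ 1) :
    1 / r - 1 ≤ c * (1 - r) := by
  have hr : 0 < r := lt_of_lt_of_le (by positivity) h₁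
  have h := mul_nonneg (sub_nonneg.mpr h₂) (sub_nonneg.mpr ((one_div_le hr hc).mpr h₁))
  rw [← mul_one_sub_sub_one_div_sub_one hr.ne'] at h
  linarith

theorem one_div_sub_one_eq_iff (hc : c ≠ 0) (hr : r ≠ 0) :
    1 / r - 1 = c * (1 - r) ↔ r = 1 ∨ r = 1 / c := by
  rw [eq_comm, ← sub_eq_zero, mul_one_sub_sub_one_div_sub_one hr, mul_eq_zero, sub_eq_zero,
    sub_eq_zero, eq_div_iff hr, eq_div_iff hc, mul_comm, eq_comm (a := (1 : ℝ))]

end ConvexBound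

theorem sum_one_div_sub_one_le {ι : Type*} (s : Finset ι) {r : ι → ℝ} {c : ℝ} (hc : 0 < c)
    (hr : ∀ i ∈ s, 1 / c ≤ r i ∧ r i ≤ 1) :
    ∑ i ∈ s, (1 / r i - 1) ≤ c * ∑ i ∈ s, (1 - r i) := by
  rw [mul_sum]
  exact sum_le_sum fun i hi => one_div_sub_one_le hc (hr i hi).1 (hr i hi).2

theorem sum_one_div_sub_one_eq_iff {ι : Type*} (s : Finset ι) {r : ι → ℝ} {c : ℝ} (hc : 0 < c)
    (hr : ∀ i ∈ s, 1 / c ≤ r i ∧ r i ≤ 1) :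
    ∑ i ∈ s, (1 / r i - 1) = c * ∑ i ∈ s, (1 - r i) ↔ ∀ i ∈ s, r i = 1 ∨ r i = 1 / c := by
  rw [mul_sum, sum_eq_sum_iff_of_le fun i hi => one_div_sub_one_le hc (hr i hi).1 (hr i hi).2]
  exact forall₂_congr fun i hi =>
    one_div_sub_one_eq_iff hc.ne' (lt_of_lt_of_le (by positivity) (hr i hi).1).ne'

theorem forall_resDist_eq_one_or_eq_iff {V : Type*} [Fintype V] [DecidableEq V]
    {G : SimpleGraph V} [DecidableRel G.Adj] (hG : G.Connected) :
    (∀ a b, G.Adj a b → resDist G a b = 1 ∨ resDist G a b = 2 / Fintype.card V)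
      ↔ G.IsTree ∨ G = ⊤ := by
  constructor
  · intro h
    exact hG.isTree_or_eq_top fun a b hab => (h a b hab).imp
      (resDist_eq_one_iff_isBridge hG hab).mp (isUniversal_of_resDist_eq_two_div_card hG hab)
  · rintro (hT | rfl) a b hab
    · exact Or.inl ((resDist_eq_one_iff_isBridge hG hab).mpr
        (isAcyclic_iff_forall_adj_isBridge.mp hT.isAcyclic hab))
    · exact Or.inr (resDist_top hab.ne)

theorem cyclicity_eq_sum_edgeResDist {V : Type*} [Fintype V] [DecidableEq V]
    (G : SimpleGraph V) [DecidableRel G.Adj] :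
    cyclicity G = ∑ e ∈ G.edgeFinset, (1 / edgeResDist G e - 1) := by
  unfold cyclicity
  exact sum_congr (by ext; simp) fun e _ => e.ind fun _ _ => rfl

theorem stmt16_general {V : Type*} [Fintype V] [DecidableEq V] (G : SimpleGraph V) [DecidableRel G.Adj]
    (hG : G.Connected) (n m : ℕ) (hn : n = Fintype.card V)
    (hm : m = G.edgeFinset.card) :
    cyclicity G ≤ (n : ℝ) * ((m : ℝ) - n + 1) / 2 ∧
    (cyclicity G = (n : ℝ) * ((m : ℝ) - n + 1) / 2 ↔ G.IsTree ∨ G = ⊤) := by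
  subst hn hm
  have hc : (0 : ℝ) < Fintype.card V / 2 := by
    have := hG.nonempty; positivity
  have hbounds : ∀ e ∈ G.edgeFinset,
      1 / ((Fintype.card V : ℝ) / 2) ≤ edgeResDist G e ∧ edgeResDist G e ≤ 1 := by
    intro e he
    induction e using Sym2.ind with
    | _ a b =>
      have hab : G.Adj a b := G.mem_edgeSet.mp (G.mem_edgeFinset.mp he)
      rw [one_div_div]
      exact ⟨two_div_card_le_resDist hG hab, resDist_le_one hG hab⟩
  have hrhs : (Fintype.card V : ℝ) * (G.edgeFinset.card - Fintype.card V + 1) / 2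
      = Fintype.card V / 2 * ∑ e ∈ G.edgeFinset, (1 - edgeResDist G e) := by
    rw [sum_sub_distrib, sum_edgeResDist hG, sum_const, nsmul_eq_mul, mul_one]
    ring
  rw [cyclicity_eq_sum_edgeResDist, hrhs, sum_one_div_sub_one_eq_iff _ hc hbounds,
    ← forall_resDist_eq_one_or_eq_iff hG, one_div_div]
  refine ⟨sum_one_div_sub_one_le _ hc hbounds, ?_⟩
  simp only [Sym2.forall, mem_edgeFinset, mem_edgeSet, edgeResDist, Sym2.lift_mk]

theorem stmt16 {V : Type*} [Fintype V] [DecidableEq V] (G : SimpleGraph V) [DecidableRel G.Adj]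
    (hG : G.Connected) (n m : ℕ) (hn : n = Fintype.card V) (h3 : 3 ≤ n)
    (hm : m = G.edgeFinset.card) :
    cyclicity G ≤ (n : ℝ) * ((m : ℝ) - n + 1) / 2 ∧
    (cyclicity G = (n : ℝ) * ((m : ℝ) - n + 1) / 2 ↔ G.IsTree ∨ G = ⊤) :=
  stmt16_general G hG n m hn hm
end
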